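/- arXiv:1809.07656 — 10 statements merged into one kernel-verified Lean document; each statement's English description precedes it below -/
import Mathlib

section
/- Let 0 < ψ < 1, let 1/2 < α < 1, let Y be a finite subset of the closed unit ball 𝔹ₙ in ℝⁿ with |Y| < ψ(2α)ⁿ, and let x be a random point sampled from the uniform (equi-)distribution in 𝔹ₙ. Then with probability greater than 1 − ψ the point x is Fisher-separable from Y with threshold α, i.e., (x, y) ≤ α (x, x) holds for all y ∈ Y. -/
open MeasureTheory RealInnerProductSpace

/-- Proposition 1: a random point from the equidistribution in the unit ball is,
with probability `> 1 - ψ`, Fisher-separable with threshold `α` from any given finite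
subset `Y` of the unit ball with `|Y| < ψ (2α)^n`. -/
theorem fisher_separability_from_finite_set_in_ball
    (n : ℕ) (hn : 0 < n) (ψ α : ℝ) (hψ : 0 < ψ) (hψ1 : ψ < 1)
    (hα : 1 / 2 < α) (hα1 : α < 1)
    (Y : Finset (EuclideanSpace ℝ (Fin n)))
    (hY : ∀ y ∈ Y, ‖y‖ ≤ 1)
    (hcard : (Y.card : ℝ) < ψ * (2 * α) ^ n)
    (μ : Measure (EuclideanSpace ℝ (Fin n)))
    (hμ : μ = (volume (Metric.closedBall (0 : EuclideanSpace ℝ (Fin n)) 1))⁻¹ •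
      volume.restrict (Metric.closedBall (0 : EuclideanSpace ℝ (Fin n)) 1)) :
    (μ {x | ∀ y ∈ Y, ⟪x, y⟫ ≤ α * ⟪x, x⟫}).toReal > 1 - ψ := by
  have hα0 : (0:ℝ) < α := by linarith
  have h2α : (0:ℝ) < 2 * α := by linarith
  set B := Metric.closedBall (0 : EuclideanSpace ℝ (Fin n)) 1 with hBdef
  set v := volume B with hvdef
  have hv0 : v ≠ 0 := (Metric.measure_closedBall_pos volume 0 one_pos).ne'
  have hvtop : v ≠ ⊤ := MeasureTheory.measure_closedBall_lt_top.ne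
  set S := {x : EuclideanSpace ℝ (Fin n) | ∀ y ∈ Y, ⟪x, y⟫ ≤ α * ⟪x, x⟫} with hSdef
  have hSmeas : MeasurableSet S := by
    have hS : S = ⋂ y ∈ Y, {x : EuclideanSpace ℝ (Fin n) | ⟪x, y⟫ ≤ α * ⟪x, x⟫} := by
      ext x; simp [hSdef]
    rw [hS]
    refine MeasurableSet.biInter Y.countable_toSet fun y _ => ?_
    exact measurableSet_le ((continuous_id.inner continuous_const)).measurable
      ((continuous_const.mul (continuous_id.inner continuous_id))).measurable
  -- measure of each bad set
  have hfr : Module.finrank ℝ (EuclideanSpace ℝ (Fin n)) = n := by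
    simp [finrank_euclideanSpace]
  have hbad : ∀ y ∈ Y, μ {x : EuclideanSpace ℝ (Fin n) | α * ⟪x, x⟫ < ⟪x, y⟫}
      ≤ ENNReal.ofReal (((2 * α)⁻¹) ^ n) := by
    intro y hy
    have hsub : {x : EuclideanSpace ℝ (Fin n) | α * ⟪x, x⟫ < ⟪x, y⟫} ⊆
        Metric.closedBall ((2 * α)⁻¹ • y) ((2 * α)⁻¹) := by
      intro x hx
      simp only [Set.mem_setOf_eq] at hx
      rw [Metric.mem_closedBall, dist_eq_norm]
      have hxx : ⟪x, x⟫ = ‖x‖ ^ 2 := real_inner_self_eq_norm_sq x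
      have hexp : ‖x - (2 * α)⁻¹ • y‖ ^ 2
          = ‖x‖ ^ 2 - 2 * ((2 * α)⁻¹ * ⟪x, y⟫) + ((2 * α)⁻¹) ^ 2 * ‖y‖ ^ 2 := by
        rw [norm_sub_sq_real, real_inner_smul_right, norm_smul, Real.norm_eq_abs,
          abs_of_pos (inv_pos.2 h2α), mul_pow]
      have hy1 : ‖y‖ ≤ 1 := hY y hy
      have hy0 : (0:ℝ) ≤ ‖y‖ := norm_nonneg _
      have hnn : (0:ℝ) ≤ ‖x - (2 * α)⁻¹ • y‖ := norm_nonneg _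
      have hle : ‖x - (2 * α)⁻¹ • y‖ ^ 2 ≤ ((2 * α)⁻¹) ^ 2 := by
        rw [hexp]
        have h1 : (2 * α)⁻¹ * (2 * α) = 1 := inv_mul_cancel₀ h2α.ne'
        nlinarith [mul_lt_mul_of_pos_left hx (inv_pos.2 h2α), sq_nonneg ‖y‖,
          mul_le_mul (le_refl (((2*α)⁻¹)^2)) (mul_le_mul hy1 hy1 hy0 zero_le_one)
            (mul_nonneg hy0 hy0) (sq_nonneg ((2*α)⁻¹))]
      exact (pow_le_pow_iff_left₀ hnn (le_of_lt (inv_pos.2 h2α)) two_ne_zero).mp hle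
    have hball : volume (Metric.closedBall ((2 * α)⁻¹ • y) ((2 * α)⁻¹))
        = ENNReal.ofReal (((2 * α)⁻¹) ^ n) * v := by
      rw [hvdef, hBdef, Measure.addHaar_closedBall' volume _ (le_of_lt (inv_pos.2 h2α)), hfr]
    calc μ {x : EuclideanSpace ℝ (Fin n) | α * ⟪x, x⟫ < ⟪x, y⟫}
        ≤ μ (Metric.closedBall ((2 * α)⁻¹ • y) ((2 * α)⁻¹)) := measure_mono hsub
      _ ≤ v⁻¹ * volume (Metric.closedBall ((2 * α)⁻¹ • y) ((2 * α)⁻¹)) := by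
          rw [hμ]
          simp only [Measure.smul_apply, smul_eq_mul]
          exact mul_le_mul_right (Measure.restrict_apply_le _ _) _
      _ = ENNReal.ofReal (((2 * α)⁻¹) ^ n) := by
          rw [hball, ← mul_assoc, mul_comm v⁻¹, mul_assoc,
            ENNReal.inv_mul_cancel hv0 hvtop, mul_one]
  -- μ is a probability measure
  have hprob : IsProbabilityMeasure μ := by
    constructor
    rw [hμ]
    simp only [Measure.smul_apply, smul_eq_mul, Measure.restrict_apply_univ]
    exact ENNReal.inv_mul_cancel hv0 hvtop
  -- complement bound
  have hcompl : Sᶜ ⊆ ⋃ y ∈ Y, {x : EuclideanSpace ℝ (Fin n) | α * ⟪x, x⟫ < ⟪x, y⟫} := by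
    intro x hx
    simp only [hSdef, Set.mem_compl_iff, Set.mem_setOf_eq, not_forall] at hx
    obtain ⟨y, hy, hxy⟩ := hx
    exact Set.mem_biUnion hy (by simpa using lt_of_not_ge hxy)
  have hSc : μ Sᶜ < ENNReal.ofReal ψ := by
    calc μ Sᶜ ≤ ∑ y ∈ Y, μ {x : EuclideanSpace ℝ (Fin n) | α * ⟪x, x⟫ < ⟪x, y⟫} :=
          (measure_mono hcompl).trans (measure_biUnion_finset_le Y _)
      _ ≤ ∑ y ∈ Y, ENNReal.ofReal (((2 * α)⁻¹) ^ n) := Finset.sum_le_sum hbad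
      _ = (Y.card : ENNReal) * ENNReal.ofReal (((2 * α)⁻¹) ^ n) := by
          rw [Finset.sum_const, nsmul_eq_mul]
      _ = ENNReal.ofReal ((Y.card : ℝ) * ((2 * α)⁻¹) ^ n) := by
          rw [ENNReal.ofReal_mul (by positivity)]
          simp
      _ < ENNReal.ofReal ψ := by
          rw [ENNReal.ofReal_lt_ofReal_iff hψ]
          have hpow : (0:ℝ) < ((2 * α)⁻¹) ^ n := by positivity
          have h1 : (2 * α) ^ n * ((2 * α)⁻¹) ^ n = 1 := by
            rw [← mul_pow, mul_inv_cancel₀ h2α.ne', one_pow]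
          calc (Y.card : ℝ) * ((2 * α)⁻¹) ^ n
              < (ψ * (2 * α) ^ n) * ((2 * α)⁻¹) ^ n := by
                exact mul_lt_mul_of_pos_right hcard hpow
            _ = ψ := by rw [mul_assoc, h1, mul_one]
  -- conclude
  have hsum : μ S + μ Sᶜ = 1 := by
    rw [measure_add_measure_compl hSmeas, measure_univ]
  have hsum' : (μ S).toReal + (μ Sᶜ).toReal = 1 := by
    rw [← ENNReal.toReal_add (measure_ne_top μ S) (measure_ne_top μ Sᶜ), hsum,
      ENNReal.toReal_one]
  have hlt : (μ Sᶜ).toReal < ψ := by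
    rw [← ENNReal.lt_ofReal_iff_toReal_lt (measure_ne_top μ Sᶜ)]
    exact hSc
  have : μ {x : EuclideanSpace ℝ (Fin n) | ∀ y ∈ Y, ⟪x, y⟫ ≤ α * ⟪x, x⟫} = μ S := rfl
  rw [this]
  linarith
end

section
/- Let a probability distribution on the unit ball 𝔹ₙ ⊂ ℝⁿ have a density whose maximal value ρ_m satisfies ρ_m < C / (rⁿ Vₙ(𝔹ₙ)), where C > 0 and r > 0 do not depend on n. Let α ∈ (1/2, 1), let Y ⊂ 𝔹ₙ be finite with |Y| < bⁿ, and suppose 2rα > b > 1. Then a random point x sampled from this distribution is Fisher-separable from Y with threshold α (i.e., (x, y) ≤ α (x, x) for all y ∈ Y) with probability p = 1 − ψ, where ψ < C (b/(2rα))ⁿ. -/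
/-!
If `α ⟪x, x⟫ < ⟪x, y⟫`, then completing the square,
`‖x - (2α)⁻¹ y‖² = ‖x‖² - α⁻¹ ⟪x, y⟫ + ‖(2α)⁻¹ y‖² < ‖(2α)⁻¹ y‖²`,
puts `x` in a ball of radius `(2α)⁻¹ ‖y‖ ≤ (2α)⁻¹`. Such a ball has volume `(2α)⁻ⁿ Vₙ(𝔹ₙ)`,
hence probability at most `ρₘ (2α)⁻ⁿ Vₙ(𝔹ₙ) < C (2rα)⁻ⁿ`, and a union bound over the fewer than
`bⁿ` points of `Y` bounds the probability that `x` is not Fisher-separable by `C (b / (2rα))ⁿ`.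
-/

open MeasureTheory Metric RealInnerProductSpace

section InnerProductSpace

variable {E : Type*} [NormedAddCommGroup E] [InnerProductSpace ℝ E]

theorem setOf_lt_inner_subset_closedBall {α : ℝ} (hα : 0 < α) (y : E) :
    {x : E | α * ⟪x, x⟫ < ⟪x, y⟫} ⊆ closedBall ((2 * α)⁻¹ • y) ((2 * α)⁻¹ * ‖y‖) := by
  intro x hx
  rw [Set.mem_ofPred_eq, real_inner_self_eq_norm_sq] at hx
  rw [mem_closedBall, dist_eq_norm,
    ← pow_le_pow_iff_left₀ (norm_nonneg _) (by positivity) two_ne_zero, norm_sub_sq_real,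
    real_inner_smul_right, norm_smul, Real.norm_of_nonneg (by positivity)]
  have : ‖x‖ ^ 2 ≤ 2 * ((2 * α)⁻¹ * ⟪x, y⟫) := by
    rw [show 2 * ((2 * α)⁻¹ * ⟪x, y⟫) = ⟪x, y⟫ / α by field_simp, le_div_iff₀' hα]
    exact hx.le
  linarith

theorem compl_setOf_inner_le_subset_biUnion_closedBall {α : ℝ} (hα : 0 < α) (Y : Finset E) :
    {x : E | ∀ y ∈ Y, ⟪x, y⟫ ≤ α * ⟪x, x⟫}ᶜ ⊆
      ⋃ y ∈ Y, closedBall ((2 * α)⁻¹ • y) ((2 * α)⁻¹ * ‖y‖) := by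
  intro x hx
  simp only [Set.mem_compl_iff, Set.mem_ofPred_eq, not_forall, not_le] at hx
  obtain ⟨y, hy, hxy⟩ := hx
  exact Set.mem_biUnion hy (setOf_lt_inner_subset_closedBall hα y hxy)

end InnerProductSpace

theorem withDensity_ofReal_le_smul {X : Type*} [MeasurableSpace X] (μ : Measure X) {f : X → ℝ}
    {M : ℝ} (hf : ∀ x, f x ≤ M) :
    μ.withDensity (fun x => ENNReal.ofReal (f x)) ≤ ENNReal.ofReal M • μ := by
  rw [← withDensity_const]
  exact withDensity_mono (ae_of_all _ fun x => ENNReal.ofReal_le_ofReal (hf x))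

theorem withDensity_ofReal_real_closedBall_le {E : Type*} [NormedAddCommGroup E]
    [NormedSpace ℝ E] [FiniteDimensional ℝ E] [MeasurableSpace E] [BorelSpace E]
    (μ : Measure E) [μ.IsAddHaarMeasure] {f : E → ℝ} {M : ℝ} (hf : ∀ x, f x ≤ M) (hM : 0 ≤ M)
    (c : E) {R : ℝ} (hR : 0 ≤ R) :
    (μ.withDensity fun x => ENNReal.ofReal (f x)).real (closedBall c R) ≤
      M * R ^ Module.finrank ℝ E * μ.real (closedBall 0 1) := by
  calc (μ.withDensity fun x => ENNReal.ofReal (f x)).real (closedBall c R)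
      ≤ (ENNReal.ofReal M • μ).real (closedBall c R) :=
        ENNReal.toReal_mono
          (ENNReal.mul_ne_top ENNReal.ofReal_ne_top measure_closedBall_lt_top.ne)
          (withDensity_ofReal_le_smul μ hf _)
    _ = M * R ^ Module.finrank ℝ E * μ.real (closedBall 0 1) := by
        rw [measureReal_ennreal_smul_apply, ENNReal.toReal_ofReal hM,
          μ.addHaar_real_closedBall' c hR, mul_assoc]

theorem one_sub_probReal_compl_le {X : Type*} [MeasurableSpace X] (μ : Measure X)
    [IsProbabilityMeasure μ] (s : Set X) : 1 - μ.real sᶜ ≤ μ.real s := by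
  have := measureReal_union_le (μ := μ) s sᶜ
  rw [Set.union_compl_self, probReal_univ] at this
  linarith

theorem mul_lt_of_lt_pow_of_lt_div {n : ℕ} {N ρ v C r α b : ℝ} (hN : 0 ≤ N) (hNb : N < b ^ n)
    (hρ : 0 ≤ ρ) (hρC : ρ < C / (r ^ n * v)) (hv0 : 0 ≤ v) (hα : 0 < α) :
    N * (ρ * (2 * α)⁻¹ ^ n * v) < C * (b / (2 * r * α)) ^ n := by
  have hX : 0 < C / (r ^ n * v) := hρ.trans_lt hρC
  have hv : 0 < v := hv0.lt_of_ne (by rintro rfl; simp at hX)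
  calc N * (ρ * (2 * α)⁻¹ ^ n * v) ≤ N * (C / (r ^ n * v) * (2 * α)⁻¹ ^ n * v) := by gcongr
    _ < b ^ n * (C / (r ^ n * v) * (2 * α)⁻¹ ^ n * v) := by gcongr
    _ = C * (b / (2 * r * α)) ^ n := by
        field_simp
        ring

theorem fisher_separability_bounded_density_general
    (n : ℕ) (C r α b : ℝ)
    (hα : 1 / 2 < α)
    (ρ : EuclideanSpace ℝ (Fin n) → ℝ) (ρm : ℝ)
    (hρ0 : ∀ x, 0 ≤ ρ x)
    (hρm : ∀ x, ρ x ≤ ρm)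
    (hρmax : ρm < C / (r ^ n *
      (volume (Metric.closedBall (0 : EuclideanSpace ℝ (Fin n)) 1)).toReal))
    (μ : Measure (EuclideanSpace ℝ (Fin n)))
    (hμ : μ = volume.withDensity (fun x => ENNReal.ofReal (ρ x)))
    (hprob : IsProbabilityMeasure μ)
    (Y : Finset (EuclideanSpace ℝ (Fin n)))
    (hY : ∀ y ∈ Y, ‖y‖ ≤ 1)
    (hcard : (Y.card : ℝ) < b ^ n) :
    (μ {x | ∀ y ∈ Y, ⟪x, y⟫ ≤ α * ⟪x, x⟫}).toReal > 1 - C * (b / (2 * r * α)) ^ n := by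
  rw [← measureReal_def] at hρmax ⊢
  have hα0 : 0 < α := by linarith
  have hρm0 : 0 ≤ ρm := (hρ0 0).trans (hρm 0)
  set v := volume.real (closedBall (0 : EuclideanSpace ℝ (Fin n)) 1)
  have hball : ∀ y ∈ Y,
      μ.real (closedBall ((2 * α)⁻¹ • y) ((2 * α)⁻¹ * ‖y‖)) ≤ ρm * (2 * α)⁻¹ ^ n * v := by
    intro y hy
    have hy' : (2 * α)⁻¹ * ‖y‖ ≤ (2 * α)⁻¹ := mul_le_of_le_one_right (by positivity) (hY y hy)
    rw [hμ]
    refine (withDensity_ofReal_real_closedBall_le volume hρm hρm0 _ (by positivity)).trans ?_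
    rw [finrank_euclideanSpace_fin]
    gcongr
  have hbad : μ.real {x | ∀ y ∈ Y, ⟪x, y⟫ ≤ α * ⟪x, x⟫}ᶜ ≤ Y.card * (ρm * (2 * α)⁻¹ ^ n * v) :=
    calc _ ≤ μ.real (⋃ y ∈ Y, closedBall ((2 * α)⁻¹ • y) ((2 * α)⁻¹ * ‖y‖)) :=
          measureReal_mono (compl_setOf_inner_le_subset_biUnion_closedBall hα0 Y)
            (measure_ne_top _ _)
      _ ≤ ∑ y ∈ Y, μ.real (closedBall ((2 * α)⁻¹ • y) ((2 * α)⁻¹ * ‖y‖)) :=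
          measureReal_biUnion_finset_le _ _
      _ ≤ Y.card * (ρm * (2 * α)⁻¹ ^ n * v) := by
          simpa using Finset.sum_le_card_nsmul Y _ _ hball
  have hlt :=
    mul_lt_of_lt_pow_of_lt_div (Nat.cast_nonneg _) hcard hρm0 hρmax measureReal_nonneg hα0
  linarith [one_sub_probReal_compl_le μ {x | ∀ y ∈ Y, ⟪x, y⟫ ≤ α * ⟪x, x⟫}]

/-- Theorem 1 (bounded density): if a probability distribution on the unit ball has a
density bounded by `ρₘ < C / (rⁿ Vₙ(𝔹ₙ))`, `|Y| < bⁿ` and `2rα > b > 1`, then a random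
point is Fisher-separable from `Y` with threshold `α` with probability `> 1 - C (b/(2rα))ⁿ`. -/
theorem fisher_separability_bounded_density
    (n : ℕ) (hn : 0 < n) (C r α b : ℝ) (hC : 0 < C) (hr : 0 < r)
    (hα : 1 / 2 < α) (hα1 : α < 1) (hb : 1 < b) (hbα : b < 2 * r * α)
    (ρ : EuclideanSpace ℝ (Fin n) → ℝ) (ρm : ℝ)
    (hρ0 : ∀ x, 0 ≤ ρ x)
    (hρsupp : ∀ x ∉ Metric.closedBall (0 : EuclideanSpace ℝ (Fin n)) 1, ρ x = 0)
    (hρm : ∀ x, ρ x ≤ ρm)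
    (hρmax : ρm < C / (r ^ n *
      (volume (Metric.closedBall (0 : EuclideanSpace ℝ (Fin n)) 1)).toReal))
    (μ : Measure (EuclideanSpace ℝ (Fin n)))
    (hμ : μ = volume.withDensity (fun x => ENNReal.ofReal (ρ x)))
    (hprob : IsProbabilityMeasure μ)
    (Y : Finset (EuclideanSpace ℝ (Fin n)))
    (hY : ∀ y ∈ Y, ‖y‖ ≤ 1)
    (hcard : (Y.card : ℝ) < b ^ n) :
    (μ {x | ∀ y ∈ Y, ⟪x, y⟫ ≤ α * ⟪x, x⟫}).toReal > 1 - C * (b / (2 * r * α)) ^ n :=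
  fisher_separability_bounded_density_general n C r α b hα ρ ρm hρ0 hρm hρmax μ hμ hprob Y hY hcard
end

section
/- Let x₁, …, x_M be M i.i.d. random points sampled from the uniform (equi-)distribution in the unit ball 𝔹ₙ ⊂ ℝⁿ, let 0 < r < 1, and set ρ = √(1 − r²). Then P( ‖x_M‖ > r and (xᵢ, x_M/‖x_M‖) < r for all i ≠ M ) ≥ 1 − rⁿ − 0.5 (M − 1) ρⁿ. -/
/-!
The event fails only if `‖x_M‖ ≤ r`, which has probability `rⁿ`, or if some `xᵢ` with `i ≠ M`
lies in the cap `{x ∈ 𝔹ₙ | r ≤ (x, u)}` for `u = x_M / ‖x_M‖`. Conditioning on `x_M` (independence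
and Fubini), each of these events has probability at most the normalized volume of such a cap.
Translation by `-r u` maps the cap into the half `{(x, u) ≥ 0}` of the ball of radius
`ρ = √(1 - r²)`, so that volume is at most `ρⁿ / 2`. A union bound concludes.
-/

open MeasureTheory ProbabilityTheory RealInnerProductSpace

lemma closedBall_one_inter_le_inner_subset {E : Type*} [NormedAddCommGroup E]
    [InnerProductSpace ℝ E] {u : E} (hu : ‖u‖ = 1) {r : ℝ} (hr : 0 ≤ r) :
    Metric.closedBall 0 1 ∩ {x | r ≤ ⟪x, u⟫} ⊆
      (· - r • u) ⁻¹' (Metric.closedBall 0 √(1 - r ^ 2) ∩ {x | 0 ≤ ⟪x, u⟫}) := by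
  rintro x ⟨hx, hxu⟩
  rw [mem_closedBall_zero_iff] at hx
  change r ≤ ⟪x, u⟫ at hxu
  have hsq : ‖x - r • u‖ ^ 2 ≤ 1 - r ^ 2 := by
    rw [norm_sub_sq_real, real_inner_smul_right, norm_smul, Real.norm_of_nonneg hr, hu]
    nlinarith [norm_nonneg x]
  refine ⟨?_, ?_⟩
  · rw [mem_closedBall_zero_iff, Real.le_sqrt (norm_nonneg _) ((sq_nonneg _).trans hsq)]
    exact hsq
  · simp [inner_sub_left, real_inner_smul_left, hu, hxu]

section UniformBall

variable {E : Type*} [NormedAddCommGroup E] [InnerProductSpace ℝ E] [FiniteDimensional ℝ E]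
  [MeasurableSpace E] [BorelSpace E] (μ : Measure E) [μ.IsAddHaarMeasure]

lemma measure_setOf_inner_eq_zero {u : E} (hu : u ≠ 0) : μ {x | ⟪x, u⟫ = 0} = 0 := by
  have hker : {x | ⟪x, u⟫ = 0} = ((ℝ ∙ u)ᗮ : Submodule ℝ E) := by
    ext x
    simp [Submodule.mem_orthogonal_singleton_iff_inner_right, real_inner_comm]
  rw [hker]
  exact Measure.addHaar_submodule μ _ (by simpa [Submodule.orthogonal_eq_top_iff] using hu)

lemma measure_closedBall_inter_inner_nonneg {u : E} (hu : u ≠ 0) (s : ℝ) :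
    μ (Metric.closedBall 0 s ∩ {x | 0 ≤ ⟪x, u⟫}) = μ (Metric.closedBall 0 s) / 2 := by
  set A := Metric.closedBall (0 : E) s ∩ {x | 0 ≤ ⟪x, u⟫}
  have hA : MeasurableSet A :=
    measurableSet_closedBall.inter (measurableSet_le measurable_const (by fun_prop))
  -- negation swaps the two halves, which meet only in a null hyperplane
  have hneg : Neg.neg ⁻¹' A = Metric.closedBall 0 s ∩ {x | ⟪x, u⟫ ≤ 0} := by
    ext x
    simp [A, inner_neg_left]
  have hunion : A ∪ Neg.neg ⁻¹' A = Metric.closedBall 0 s := by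
    rw [hneg, ← Set.inter_union_distrib_left, Set.inter_eq_left]
    intro x _
    exact le_total 0 ⟪x, u⟫
  have hinter : μ (A ∩ Neg.neg ⁻¹' A) = 0 := by
    refine measure_mono_null ?_ (measure_setOf_inner_eq_zero μ hu)
    rw [hneg]
    rintro x ⟨⟨-, h₁⟩, -, h₂⟩
    exact le_antisymm h₂ h₁
  have := measure_union_add_inter A (hA.preimage measurable_neg) (μ := μ)
  rw [hunion, hinter, add_zero, Measure.measure_preimage_neg, ← two_mul] at this
  exact (ENNReal.eq_div_iff two_ne_zero ENNReal.ofNat_ne_top).mpr this.symm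

lemma measure_closedBall_one_inter_le_inner_le {u : E} (hu : ‖u‖ = 1) {r : ℝ} (hr : 0 ≤ r) :
    μ (Metric.closedBall 0 1 ∩ {x | r ≤ ⟪x, u⟫}) ≤
      ENNReal.ofReal (√(1 - r ^ 2) ^ Module.finrank ℝ E) * μ (Metric.closedBall 0 1) / 2 := by
  have hu0 : u ≠ 0 := by rintro rfl; simp at hu
  calc μ (Metric.closedBall 0 1 ∩ {x | r ≤ ⟪x, u⟫})
      ≤ μ ((· - r • u) ⁻¹' (Metric.closedBall 0 √(1 - r ^ 2) ∩ {x | 0 ≤ ⟪x, u⟫})) :=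
        measure_mono (closedBall_one_inter_le_inner_subset hu hr)
    _ = μ (Metric.closedBall 0 √(1 - r ^ 2) ∩ {x | 0 ≤ ⟪x, u⟫}) := by
        simp_rw [sub_eq_add_neg]
        exact measure_preimage_add_right μ _ _
    _ = _ := by
        rw [measure_closedBall_inter_inner_nonneg μ hu0,
          Measure.addHaar_closedBall' μ _ (Real.sqrt_nonneg _)]

lemma cond_closedBall_one_closedBall {r : ℝ} (hr0 : 0 ≤ r) (hr1 : r ≤ 1) :
    μ[|Metric.closedBall 0 1] (Metric.closedBall 0 r) =
      ENNReal.ofReal (r ^ Module.finrank ℝ E) := by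
  rw [cond_apply measurableSet_closedBall, Set.inter_eq_right.mpr
      (Metric.closedBall_subset_closedBall hr1), Measure.addHaar_closedBall' μ _ hr0,
    mul_left_comm, ENNReal.inv_mul_cancel (Metric.measure_closedBall_pos μ 0 one_pos).ne'
      measure_closedBall_lt_top.ne, mul_one]

lemma cond_closedBall_one_setOf_le_inner_le {r : ℝ} (hr : 0 < r) (y : E) :
    μ[|Metric.closedBall 0 1] {x | r ≤ ⟪x, ‖y‖⁻¹ • y⟫} ≤
      ENNReal.ofReal (√(1 - r ^ 2) ^ Module.finrank ℝ E / 2) := by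
  rcases eq_or_ne y 0 with rfl | hy
  · simp [hr.not_ge]
  have hB0 : μ (Metric.closedBall 0 1) ≠ 0 := (Metric.measure_closedBall_pos μ 0 one_pos).ne'
  have hBtop : μ (Metric.closedBall 0 1) ≠ ⊤ := measure_closedBall_lt_top.ne
  rw [cond_apply measurableSet_closedBall, ENNReal.ofReal_div_of_pos two_pos, ENNReal.ofReal_ofNat]
  calc (μ (Metric.closedBall 0 1))⁻¹ * μ (Metric.closedBall 0 1 ∩ {x | r ≤ ⟪x, ‖y‖⁻¹ • y⟫})
      ≤ (μ (Metric.closedBall 0 1))⁻¹ *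
          (ENNReal.ofReal (√(1 - r ^ 2) ^ Module.finrank ℝ E) *
            μ (Metric.closedBall 0 1) / 2) := by
        gcongr
        exact measure_closedBall_one_inter_le_inner_le μ (norm_smul_inv_norm hy) hr.le
    _ = ENNReal.ofReal (√(1 - r ^ 2) ^ Module.finrank ℝ E) / 2 := by
        rw [mul_comm (ENNReal.ofReal _), mul_div_assoc, ← mul_assoc,
          ENNReal.inv_mul_cancel hB0 hBtop, one_mul]

end UniformBall

lemma ProbabilityTheory.IndepFun.measure_preimage_le_of_forall_slice_le
    {Ω α β : Type*} [MeasurableSpace Ω] [MeasurableSpace α] [MeasurableSpace β]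
    {P : Measure Ω} [IsProbabilityMeasure P] {X : Ω → α} {Y : Ω → β} (hXY : IndepFun X Y P)
    (hX : Measurable X) (hY : Measurable Y) {T : Set (α × β)} (hT : MeasurableSet T)
    {c : ENNReal} (hc : ∀ x, P.map Y (Prod.mk x ⁻¹' T) ≤ c) :
    P ((fun ω ↦ (X ω, Y ω)) ⁻¹' T) ≤ c := by
  have : IsProbabilityMeasure (P.map X) := Measure.isProbabilityMeasure_map hX.aemeasurable
  rw [← Measure.map_apply (hX.prodMk hY) hT,
    (indepFun_iff_map_prod_eq_prod_map_map hX.aemeasurable hY.aemeasurable).mp hXY,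
    Measure.prod_apply hT]
  calc ∫⁻ x, P.map Y (Prod.mk x ⁻¹' T) ∂P.map X ≤ ∫⁻ _, c ∂P.map X := lintegral_mono hc
    _ = c := by rw [lintegral_const, measure_univ, mul_one]

lemma one_sub_le_toReal_of_measure_compl_le {Ω : Type*} [MeasurableSpace Ω] {P : Measure Ω}
    [IsProbabilityMeasure P] {s : Set Ω} {b : ℝ} (hb : 0 ≤ b) (h : P sᶜ ≤ ENNReal.ofReal b) :
    1 - b ≤ (P s).toReal := by
  have hcover : 1 ≤ P s + ENNReal.ofReal b :=
    calc 1 = P (s ∪ sᶜ) := by rw [Set.union_compl_self, measure_univ]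
      _ ≤ P s + P sᶜ := measure_union_le _ _
      _ ≤ P s + ENNReal.ofReal b := by gcongr
  have := ENNReal.toReal_mono (by finiteness) hcover
  rw [ENNReal.toReal_add (measure_ne_top P s) ENNReal.ofReal_ne_top, ENNReal.toReal_ofReal hb,
    ENNReal.toReal_one] at this
  linarith

def IsThresholdSeparated {ι E : Type*} [NormedAddCommGroup E] [InnerProductSpace ℝ E]
    (r : ℝ) (x : ι → E) (m : ι) : Prop :=
  r < ‖x m‖ ∧ ∀ i, i ≠ m → ⟪x i, ‖x m‖⁻¹ • x m⟫ < r

section Separation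

variable {ι Ω E : Type*} [Fintype ι] [MeasurableSpace Ω] {P : Measure Ω} [IsProbabilityMeasure P]
  [NormedAddCommGroup E] [InnerProductSpace ℝ E] [FiniteDimensional ℝ E]
  [MeasurableSpace E] [BorelSpace E] (μ : Measure E) [μ.IsAddHaarMeasure]

lemma measure_compl_setOf_isThresholdSeparated_le (X : ι → Ω → E) (m : ι)
    (hmeas : ∀ i, Measurable (X i)) (hindep : iIndepFun X P)
    (hdist : ∀ i, P.map (X i) = μ[|Metric.closedBall 0 1]) {r : ℝ} (hr0 : 0 < r) (hr1 : r ≤ 1) :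
    P {ω | IsThresholdSeparated r (X · ω) m}ᶜ ≤
      ENNReal.ofReal (r ^ Module.finrank ℝ E +
        (Fintype.card ι - 1) * (√(1 - r ^ 2) ^ Module.finrank ℝ E / 2)) := by
  classical
  set d := Module.finrank ℝ E
  have hsmall : P {ω | ‖X m ω‖ ≤ r} = ENNReal.ofReal (r ^ d) := by
    have hpre : {ω | ‖X m ω‖ ≤ r} = X m ⁻¹' Metric.closedBall 0 r := by
      ext ω; simp
    rw [hpre, ← Measure.map_apply (hmeas m) measurableSet_closedBall, hdist m,
      cond_closedBall_one_closedBall μ hr0.le hr1]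
  have hcap : ∀ i ≠ m, P {ω | r ≤ ⟪X i ω, ‖X m ω‖⁻¹ • X m ω⟫} ≤
      ENNReal.ofReal (√(1 - r ^ 2) ^ d / 2) := by
    intro i hi
    refine (hindep.indepFun hi.symm).measure_preimage_le_of_forall_slice_le (hmeas m) (hmeas i)
      (T := {p : E × E | r ≤ ⟪p.2, ‖p.1‖⁻¹ • p.1⟫}) ?_ fun y ↦ ?_
    · exact measurableSet_le measurable_const (by fun_prop)
    · rw [hdist i]
      exact cond_closedBall_one_setOf_le_inner_le μ hr0 y
  have hcover : {ω | IsThresholdSeparated r (X · ω) m}ᶜ ⊆ {ω | ‖X m ω‖ ≤ r} ∪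
      ⋃ i ∈ Finset.univ.erase m, {ω | r ≤ ⟪X i ω, ‖X m ω‖⁻¹ • X m ω⟫} := by
    intro ω hω
    simp only [IsThresholdSeparated, Set.mem_compl_iff, Set.mem_ofPred_eq, not_and_or, not_lt,
      not_forall] at hω
    simp only [Set.mem_union, Set.mem_ofPred_eq, Set.mem_iUnion, Finset.mem_erase,
      Finset.mem_univ, and_true]
    exact hω
  calc P {ω | IsThresholdSeparated r (X · ω) m}ᶜ
      ≤ P {ω | ‖X m ω‖ ≤ r} +
          ∑ i ∈ Finset.univ.erase m, P {ω | r ≤ ⟪X i ω, ‖X m ω‖⁻¹ • X m ω⟫} :=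
        (measure_mono hcover).trans <| (measure_union_le _ _).trans <|
          add_le_add_right (measure_biUnion_finset_le _ _) _
    _ ≤ ENNReal.ofReal (r ^ d) +
          ∑ i ∈ Finset.univ.erase m, ENNReal.ofReal (√(1 - r ^ 2) ^ d / 2) :=
        add_le_add hsmall.le (Finset.sum_le_sum fun i hi ↦ hcap i (Finset.ne_of_mem_erase hi))
    _ = _ := by
        rw [Finset.sum_const, Finset.card_erase_of_mem (Finset.mem_univ m), Finset.card_univ,
          nsmul_eq_mul, ← ENNReal.ofReal_natCast, ← ENNReal.ofReal_mul (by positivity),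
          ← ENNReal.ofReal_add (by positivity) (by positivity),
          Nat.cast_pred (Fintype.card_pos_iff.mpr ⟨m⟩)]

end Separation

theorem stochastic_separation_single_point_ball_general
    (n M : ℕ) (hM : 0 < M)
    (r ρ : ℝ) (hr : 0 < r) (hr1 : r < 1) (hρ : ρ = Real.sqrt (1 - r ^ 2))
    (Ω : Type*) [MeasurableSpace Ω] (P : Measure Ω) [IsProbabilityMeasure P]
    (X : Fin M → Ω → EuclideanSpace ℝ (Fin n))
    (hmeas : ∀ i, Measurable (X i))
    (hindep : iIndepFun X P)
    (hdist : ∀ i, Measure.map (X i) P =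
      (volume (Metric.closedBall (0 : EuclideanSpace ℝ (Fin n)) 1))⁻¹ •
        volume.restrict (Metric.closedBall (0 : EuclideanSpace ℝ (Fin n)) 1)) :
    (P {ω | ‖X (⟨M - 1, Nat.sub_lt hM Nat.one_pos⟩ : Fin M) ω‖ > r ∧
        ∀ i : Fin M, i ≠ ⟨M - 1, Nat.sub_lt hM Nat.one_pos⟩ →
          ⟪X i ω, ‖X (⟨M - 1, Nat.sub_lt hM Nat.one_pos⟩ : Fin M) ω‖⁻¹ •
            X (⟨M - 1, Nat.sub_lt hM Nat.one_pos⟩ : Fin M) ω⟫ < r}).toReal ≥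
      1 - r ^ n - 0.5 * ((M : ℝ) - 1) * ρ ^ n := by
  have hbad := measure_compl_setOf_isThresholdSeparated_le volume X ⟨M - 1, by omega⟩ hmeas
    hindep hdist hr hr1.le
  rw [finrank_euclideanSpace_fin, Fintype.card_fin, ← hρ] at hbad
  have hM1 : (0 : ℝ) ≤ M - 1 := sub_nonneg.mpr (by exact_mod_cast hM)
  have hρ0 : 0 ≤ ρ := hρ ▸ Real.sqrt_nonneg _
  calc 1 - r ^ n - 0.5 * ((M : ℝ) - 1) * ρ ^ n = 1 - (r ^ n + (M - 1) * (ρ ^ n / 2)) := by ring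
    _ ≤ _ := one_sub_le_toReal_of_measure_compl_le (by positivity) hbad

/-- Theorem 2, inequality (7): for `M` i.i.d. points uniform in the unit ball,
with probability at least `1 - rⁿ - 0.5 (M-1) ρⁿ` (where `ρ = √(1-r²)`) the last point
has norm `> r` and separates all the other points:
`⟪xᵢ, x_M / ‖x_M‖⟫ < r` for all `i ≠ M`. -/
theorem stochastic_separation_single_point_ball
    (n M : ℕ) (hn : 0 < n) (hM : 0 < M)
    (r ρ : ℝ) (hr : 0 < r) (hr1 : r < 1) (hρ : ρ = Real.sqrt (1 - r ^ 2))
    (Ω : Type*) [MeasurableSpace Ω] (P : Measure Ω) [IsProbabilityMeasure P]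
    (X : Fin M → Ω → EuclideanSpace ℝ (Fin n))
    (hmeas : ∀ i, Measurable (X i))
    (hindep : iIndepFun X P)
    (hdist : ∀ i, Measure.map (X i) P =
      (volume (Metric.closedBall (0 : EuclideanSpace ℝ (Fin n)) 1))⁻¹ •
        volume.restrict (Metric.closedBall (0 : EuclideanSpace ℝ (Fin n)) 1)) :
    (P {ω | ‖X (⟨M - 1, Nat.sub_lt hM Nat.one_pos⟩ : Fin M) ω‖ > r ∧
        ∀ i : Fin M, i ≠ ⟨M - 1, Nat.sub_lt hM Nat.one_pos⟩ →
          ⟪X i ω, ‖X (⟨M - 1, Nat.sub_lt hM Nat.one_pos⟩ : Fin M) ω‖⁻¹ •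
            X (⟨M - 1, Nat.sub_lt hM Nat.one_pos⟩ : Fin M) ω⟫ < r}).toReal ≥
      1 - r ^ n - 0.5 * ((M : ℝ) - 1) * ρ ^ n :=
  stochastic_separation_single_point_ball_general n M hM r ρ hr hr1 hρ Ω P X hmeas hindep hdist
end

section
/- Let x₁, …, x_M be M i.i.d. random points sampled from the uniform (equi-)distribution in the unit ball 𝔹ₙ ⊂ ℝⁿ, let 0 < r < 1, and set ρ = √(1 − r²). Then P( ‖xⱼ‖ > r for all j and (xᵢ, xⱼ/‖xⱼ‖) < r for all i ≠ j ) ≥ 1 − M rⁿ − 0.5 M (M − 1) ρⁿ. -/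
/-!
By the union bound, the failure probability is at most `∑ⱼ P(‖xⱼ‖ ≤ r)` plus
`∑_{i ≠ j} P(r ≤ ⟪xᵢ, xⱼ/‖xⱼ‖⟫)`. Each term of the first sum is `rⁿ`, the relative volume of
the ball of radius `r`. For the second, fix `xⱼ` (independence and Fubini): for a unit vector
`u`, the cap `{x ∈ 𝔹ₙ | r ≤ ⟪x, u⟫}` lies in the translate by `r • u` of a half-ball of radius
`ρ = √(1 - r²)`, whose relative volume is `ρⁿ / 2`. There are `M (M - 1)` ordered pairs.
-/

open MeasureTheory ProbabilityTheory RealInnerProductSpace Metric Set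
open scoped ENNReal Pointwise

section HaarMeasure

variable {E : Type*} [NormedAddCommGroup E] [InnerProductSpace ℝ E]

lemma norm_sub_smul_le_sqrt_one_sub_sq {x u : E} {r : ℝ} (hr : 0 ≤ r) (hu : ‖u‖ = 1)
    (hx : ‖x‖ ≤ 1) (hxu : r ≤ ⟪x, u⟫) : ‖x - r • u‖ ≤ √(1 - r ^ 2) := by
  refine Real.le_sqrt_of_sq_le ?_
  rw [norm_sub_sq_real, real_inner_smul_right, norm_smul, Real.norm_of_nonneg hr, hu]
  nlinarith [norm_nonneg x]

variable [FiniteDimensional ℝ E] [MeasurableSpace E] [BorelSpace E] (μ : Measure E)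
  [μ.IsAddHaarMeasure]

lemma addHaar_inter_setOf_inner_nonneg {s : Set E} (hs : MeasurableSet s) (hneg : -s = s)
    {u : E} (hu : u ≠ 0) : μ (s ∩ {x | 0 ≤ ⟪x, u⟫}) = μ s / 2 := by
  set H := s ∩ {x | 0 ≤ ⟪x, u⟫}
  have hH : MeasurableSet H :=
    hs.inter (measurableSet_le measurable_const measurable_id.inner_const)
  have hnegH : Neg.neg ⁻¹' H = s ∩ {x | ⟪x, u⟫ ≤ 0} := by
    ext x
    simp [H, hneg]
  have hunion : H ∪ Neg.neg ⁻¹' H = s := by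
    rw [hnegH, ← inter_union_distrib_left, inter_eq_left]
    exact fun x _ ↦ le_total 0 ⟪x, u⟫
  have hinter : H ∩ Neg.neg ⁻¹' H ⊆ ((ℝ ∙ u)ᗮ : Submodule ℝ E) := by
    rw [hnegH]
    rintro x ⟨⟨-, h₁⟩, -, h₂⟩
    exact Submodule.mem_orthogonal_singleton_iff_inner_left.2 (le_antisymm h₂ h₁)
  have hnull : μ (H ∩ Neg.neg ⁻¹' H) = 0 :=
    measure_mono_null hinter <| μ.addHaar_submodule _ <| by
      simpa [Submodule.orthogonal_eq_top_iff] using hu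
  have htwo : 2 * μ H = μ s := by
    rw [two_mul]
    nth_rw 2 [← μ.measure_preimage_neg H]
    rw [← measure_union_add_inter₀' hH.nullMeasurableSet, hnull, add_zero, hunion]
  exact (ENNReal.eq_div_iff two_ne_zero ENNReal.ofNat_ne_top).2 htwo

lemma cond_closedBall_setOf_norm_le {r : ℝ} (hr0 : 0 ≤ r) (hr1 : r ≤ 1) :
    μ[|closedBall 0 1] {x | ‖x‖ ≤ r} = ENNReal.ofReal (r ^ Module.finrank ℝ E) := by
  have hball : {x : E | ‖x‖ ≤ r} = closedBall 0 r := by ext; simp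
  rw [cond_apply measurableSet_closedBall, hball,
    Set.inter_eq_right.2 (closedBall_subset_closedBall hr1), μ.addHaar_closedBall' 0 hr0,
    mul_comm (ENNReal.ofReal _),
    ENNReal.inv_mul_cancel_left (measure_closedBall_pos μ 0 one_pos).ne'
      measure_closedBall_lt_top.ne]

lemma cond_closedBall_setOf_le_inner_le {r : ℝ} (hr : 0 ≤ r) {u : E} (hu : ‖u‖ = 1) :
    μ[|closedBall 0 1] {x | r ≤ ⟪x, u⟫} ≤
      ENNReal.ofReal (√(1 - r ^ 2) ^ Module.finrank ℝ E) / 2 := by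
  have hcap : closedBall 0 1 ∩ {x | r ≤ ⟪x, u⟫} ⊆
      (· + -(r • u)) ⁻¹' (closedBall (0 : E) √(1 - r ^ 2) ∩ {x | 0 ≤ ⟪x, u⟫}) := by
    rintro x ⟨hx, hxu : r ≤ ⟪x, u⟫⟩
    rw [mem_closedBall_zero_iff] at hx
    refine ⟨mem_closedBall_zero_iff.2 ?_, ?_⟩
    · simpa [← sub_eq_add_neg] using norm_sub_smul_le_sqrt_one_sub_sq hr hu hx hxu
    · simpa [← sub_eq_add_neg, inner_sub_left, real_inner_smul_left, hu] using hxu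
  have hB₀ := (measure_closedBall_pos μ (0 : E) one_pos).ne'
  have hB := (measure_closedBall_lt_top (μ := μ) (x := (0 : E)) (r := 1)).ne
  rw [cond_apply measurableSet_closedBall]
  calc (μ (closedBall 0 1))⁻¹ * μ (closedBall 0 1 ∩ {x | r ≤ ⟪x, u⟫})
      ≤ (μ (closedBall 0 1))⁻¹ * μ (closedBall (0 : E) √(1 - r ^ 2) ∩ {x | 0 ≤ ⟪x, u⟫}) := by
        grw [hcap, measure_preimage_add_right]
    _ = ENNReal.ofReal (√(1 - r ^ 2) ^ Module.finrank ℝ E) / 2 := by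
        rw [addHaar_inter_setOf_inner_nonneg μ measurableSet_closedBall (by simp)
          (norm_ne_zero_iff.1 (hu ▸ one_ne_zero)), μ.addHaar_closedBall' 0 (Real.sqrt_nonneg _),
          mul_comm (ENNReal.ofReal _), mul_div_assoc, ENNReal.inv_mul_cancel_left hB₀ hB]

end HaarMeasure

section Normalization

variable {E : Type*} [NormedAddCommGroup E] [InnerProductSpace ℝ E] [MeasurableSpace E]
  [BorelSpace E] [SecondCountableTopology E]

lemma measurableSet_setOf_le_inner_normalize (r : ℝ) :
    MeasurableSet {p : E × E | r ≤ ⟪p.2, ‖p.1‖⁻¹ • p.1⟫} :=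
  measurableSet_le measurable_const
    (measurable_snd.inner ((measurable_fst.norm.inv).smul measurable_fst))

lemma prod_setOf_le_inner_normalize_le {μ ν : Measure E} [IsProbabilityMeasure μ] [SFinite ν]
    {r : ℝ} (hr : 0 < r) {c : ℝ≥0∞} (hν : ∀ u : E, ‖u‖ = 1 → ν {y | r ≤ ⟪y, u⟫} ≤ c) :
    μ.prod ν {p : E × E | r ≤ ⟪p.2, ‖p.1‖⁻¹ • p.1⟫} ≤ c := by
  rw [Measure.prod_apply (measurableSet_setOf_le_inner_normalize r)]
  calc ∫⁻ x, ν {y | r ≤ ⟪y, ‖x‖⁻¹ • x⟫} ∂μ ≤ ∫⁻ _, c ∂μ := by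
        refine lintegral_mono fun x ↦ ?_
        rcases eq_or_ne x 0 with rfl | hx
        · -- `‖0‖⁻¹ • 0 = 0`, so the slice is `{y | r ≤ 0} = ∅`
          simp [hr.not_ge]
        · exact hν _ (norm_smul_inv_norm hx)
    _ = c := by simp

lemma ProbabilityTheory.IndepFun.measure_setOf_le_inner_normalize_le {Ω : Type*}
    [MeasurableSpace Ω] {P : Measure Ω} [IsProbabilityMeasure P] {X Y : Ω → E} (hX : Measurable X)
    (hY : Measurable Y) (hXY : IndepFun X Y P) {r : ℝ} (hr : 0 < r) {c : ℝ≥0∞}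
    (hYc : ∀ u : E, ‖u‖ = 1 → P.map Y {y | r ≤ ⟪y, u⟫} ≤ c) :
    P {ω | r ≤ ⟪Y ω, ‖X ω‖⁻¹ • X ω⟫} ≤ c := by
  have := Measure.isProbabilityMeasure_map (μ := P) hX.aemeasurable
  have hmap := (indepFun_iff_map_prod_eq_prod_map_map hX.aemeasurable hY.aemeasurable).1 hXY
  calc P {ω | r ≤ ⟪Y ω, ‖X ω‖⁻¹ • X ω⟫}
      = P.map (fun ω ↦ (X ω, Y ω)) {p : E × E | r ≤ ⟪p.2, ‖p.1‖⁻¹ • p.1⟫} :=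
        (Measure.map_apply (hX.prodMk hY) (measurableSet_setOf_le_inner_normalize r)).symm
    _ ≤ c := hmap ▸ prod_setOf_le_inner_normalize_le hr hYc

end Normalization

section UnionBound

variable {Ω : Type*} [MeasurableSpace Ω] {P : Measure Ω} [IsProbabilityMeasure P]

lemma one_sub_probReal_le_probReal_compl (s : Set Ω) : 1 - P.real s ≤ P.real sᶜ := by
  have h := measureReal_union_le (μ := P) s sᶜ
  rw [union_compl_self, probReal_univ] at h
  linarith

lemma one_sub_sum_le_probReal_forall_not_mem {ι : Type*} [Fintype ι] [DecidableEq ι]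
    (A : ι → Set Ω) (D : ι → ι → Set Ω) {a b : ℝ} (hA : ∀ i, P.real (A i) ≤ a)
    (hD : ∀ i j, i ≠ j → P.real (D i j) ≤ b) :
    1 - Fintype.card ι * a - Fintype.card ι * (Fintype.card ι - 1) * b ≤
      P.real {ω | (∀ j, ω ∉ A j) ∧ ∀ i j, i ≠ j → ω ∉ D i j} := by
  have hgood : {ω | (∀ j, ω ∉ A j) ∧ ∀ i j, i ≠ j → ω ∉ D i j} =
      ((⋃ j, A j) ∪ ⋃ p ∈ Finset.univ.offDiag, D p.1 p.2)ᶜ := by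
    ext ω
    simp
  have hsumD : ∑ p ∈ Finset.univ.offDiag, P.real (D p.1 p.2) ≤
      Fintype.card ι * (Fintype.card ι - 1) * b := by
    grw [Finset.sum_le_sum fun p hp ↦ hD p.1 p.2 (Finset.mem_offDiag.1 hp).2.2]
    rw [Finset.sum_const, Finset.offDiag_card, nsmul_eq_mul, Nat.cast_sub (Nat.le_mul_self _),
      Finset.card_univ]
    push_cast
    apply le_of_eq
    ring
  rw [hgood]
  calc 1 - Fintype.card ι * a - Fintype.card ι * (Fintype.card ι - 1) * b
      ≤ 1 - (∑ j, P.real (A j) + ∑ p ∈ Finset.univ.offDiag, P.real (D p.1 p.2)) := by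
        grw [Finset.sum_le_sum fun j _ ↦ hA j, hsumD]
        simp only [Finset.sum_const, Finset.card_univ, nsmul_eq_mul]
        linarith
    _ ≤ 1 - P.real ((⋃ j, A j) ∪ ⋃ p ∈ Finset.univ.offDiag, D p.1 p.2) := by
        grw [measureReal_union_le, measureReal_iUnion_fintype_le, measureReal_biUnion_finset_le]
    _ ≤ _ := one_sub_probReal_le_probReal_compl _

end UnionBound


theorem stochastic_separation_all_points_ball_general
    (n M : ℕ)
    (r ρ : ℝ) (hr : 0 < r) (hr1 : r < 1) (hρ : ρ = Real.sqrt (1 - r ^ 2))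
    (Ω : Type*) [MeasurableSpace Ω] (P : Measure Ω) [IsProbabilityMeasure P]
    (X : Fin M → Ω → EuclideanSpace ℝ (Fin n))
    (hmeas : ∀ i, Measurable (X i))
    (hindep : iIndepFun X P)
    (hdist : ∀ i, Measure.map (X i) P =
      (volume (Metric.closedBall (0 : EuclideanSpace ℝ (Fin n)) 1))⁻¹ •
        volume.restrict (Metric.closedBall (0 : EuclideanSpace ℝ (Fin n)) 1)) :
    (P {ω | (∀ j : Fin M, ‖X j ω‖ > r) ∧
        ∀ i j : Fin M, i ≠ j → ⟪X i ω, ‖X j ω‖⁻¹ • X j ω⟫ < r}).toReal ≥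
      1 - (M : ℝ) * r ^ n - 0.5 * (M : ℝ) * ((M : ℝ) - 1) * ρ ^ n := by
  change ∀ i, P.map (X i) = volume[|closedBall 0 1] at hdist
  subst hρ
  have hnorm j : P.real (X j ⁻¹' {x | ‖x‖ ≤ r}) ≤ r ^ n := by
    rw [← map_measureReal_apply (hmeas j) (measurableSet_le measurable_norm measurable_const),
      hdist, measureReal_def, cond_closedBall_setOf_norm_le _ hr.le hr1.le,
      finrank_euclideanSpace_fin, ENNReal.toReal_ofReal (by positivity)]
  have hinner i j (hij : i ≠ j) :
      P.real {ω | r ≤ ⟪X i ω, ‖X j ω‖⁻¹ • X j ω⟫} ≤ √(1 - r ^ 2) ^ n / 2 := by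
    have hcap := (hindep.indepFun hij.symm).measure_setOf_le_inner_normalize_le (hmeas j)
      (hmeas i) hr fun u hu ↦ hdist i ▸ cond_closedBall_setOf_le_inner_le _ hr.le hu
    rw [finrank_euclideanSpace_fin] at hcap
    have := ENNReal.toReal_mono (by finiteness) hcap
    rwa [ENNReal.toReal_div, ENNReal.toReal_ofReal (by positivity), ENNReal.toReal_ofNat] at this
  have hbound := one_sub_sum_le_probReal_forall_not_mem (P := P) _ _ hnorm hinner
  simp only [mem_preimage, mem_ofPred_eq, not_le, Fintype.card_fin] at hbound
  simp only [gt_iff_lt, ge_iff_le, ← measureReal_def]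
  linarith

/-- Theorem 2, inequality (8): for `M` i.i.d. points uniform in the unit ball,
with probability at least `1 - M rⁿ - 0.5 M (M-1) ρⁿ` (where `ρ = √(1-r²)`)
every point has norm `> r` and `⟪xᵢ, xⱼ/‖xⱼ‖⟫ < r` for all `i ≠ j`. -/
theorem stochastic_separation_all_points_ball
    (n M : ℕ) (hn : 0 < n) (hM : 0 < M)
    (r ρ : ℝ) (hr : 0 < r) (hr1 : r < 1) (hρ : ρ = Real.sqrt (1 - r ^ 2))
    (Ω : Type*) [MeasurableSpace Ω] (P : Measure Ω) [IsProbabilityMeasure P]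
    (X : Fin M → Ω → EuclideanSpace ℝ (Fin n))
    (hmeas : ∀ i, Measurable (X i))
    (hindep : iIndepFun X P)
    (hdist : ∀ i, Measure.map (X i) P =
      (volume (Metric.closedBall (0 : EuclideanSpace ℝ (Fin n)) 1))⁻¹ •
        volume.restrict (Metric.closedBall (0 : EuclideanSpace ℝ (Fin n)) 1)) :
    (P {ω | (∀ j : Fin M, ‖X j ω‖ > r) ∧
        ∀ i j : Fin M, i ≠ j → ⟪X i ω, ‖X j ω‖⁻¹ • X j ω⟫ < r}).toReal ≥
      1 - (M : ℝ) * r ^ n - 0.5 * (M : ℝ) * ((M : ℝ) - 1) * ρ ^ n :=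
  stochastic_separation_all_points_ball_general n M r ρ hr hr1 hρ Ω P X hmeas hindep hdist
end

section
/- Let x₁, …, x_M be M i.i.d. random points sampled from the uniform (equi-)distribution in the unit ball 𝔹ₙ ⊂ ℝⁿ, let 0 < r, ϑ < 1, and set ρ = √(1 − r²). If M < (r/ρ)ⁿ ( −1 + √(1 + 2ϑ ρⁿ / r^{2n}) ), then P( (xᵢ, xⱼ) < r ‖xᵢ‖ for all i, j = 1, …, M with i ≠ j ) ≥ 1 − ϑ; in particular, under this bound on M, the set {x₁, …, x_M} is Fisher-separable with probability greater than 1 − ϑ. -/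
/-!
For `i ≠ j` and `xᵢ = x ≠ 0`, the bad event `(xᵢ, xⱼ) ≥ r‖xᵢ‖` asks `xⱼ` to lie in the cap
`{y ∈ 𝔹ₙ : (x/‖x‖, y) ≥ r}`. Since `‖y - r x/‖x‖‖² ≤ 1 - r² = ρ²` on the cap, it lies in one
half of the ball of radius `ρ` centred at `r x/‖x‖`, so its probability is at most `ρⁿ/2`.
A union bound over the `M²` ordered pairs, plus `M rⁿ` for the event that some `‖xᵢ‖ ≤ r`,
bounds the failure probability by `ρⁿM²/2 + rⁿM`, and the bound on `M` says exactly that this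
is `< ϑ`, `M` lying below the positive root of `ρⁿt²/2 + rⁿt = ϑ`. Off these events every
`‖xᵢ‖ > r`, so every threshold `α < 1` close enough to `1` separates the points.
-/

open MeasureTheory ProbabilityTheory RealInnerProductSpace Metric Module
open scoped ENNReal Topology

section Geometry

variable {E : Type*} [NormedAddCommGroup E] [InnerProductSpace ℝ E] [FiniteDimensional ℝ E]
  [MeasurableSpace E] [BorelSpace E] (μ : Measure E) [μ.IsAddHaarMeasure]

theorem addHaar_setOf_inner_eq {u : E} (hu : u ≠ 0) (a : ℝ) : μ {y | ⟪u, y⟫ = a} = 0 := by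
  let H : AffineSubspace ℝ E := (affineSpan ℝ {a}).comap (innerₛₗ ℝ u).toAffineMap
  have hH : (H : Set E) = {y | ⟪u, y⟫ = a} := by
    ext y; simp [H]
  have hH_ne_top : H ≠ ⊤ := by
    intro htop
    have h0 : (0 : E) ∈ (H : Set E) := htop ▸ trivial
    have hu' : u ∈ (H : Set E) := htop ▸ trivial
    rw [hH] at h0 hu'
    simp only [Set.mem_ofPred_eq, inner_zero_right, real_inner_self_eq_norm_sq] at h0 hu'
    exact hu (norm_eq_zero.1 (pow_eq_zero_iff two_ne_zero |>.1 (hu'.trans h0.symm)))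
  rw [← hH]
  exact Measure.addHaar_affineSubspace μ H hH_ne_top

-- Reflection through `c` swaps the two closed half-balls, and the hyperplane between them is null.
theorem two_mul_addHaar_closedBall_inter_halfspace {u : E} (hu : u ≠ 0) (c : E) (ρ : ℝ) :
    2 * μ (closedBall c ρ ∩ {y | ⟪u, c⟫ ≤ ⟪u, y⟫}) = μ (closedBall c ρ) := by
  set a := ⟪u, c⟫
  set upper := closedBall c ρ ∩ {y | a ≤ ⟪u, y⟫}
  set lower := closedBall c ρ ∩ {y | ⟪u, y⟫ ≤ a}
  have h_meas_lower : MeasurableSet lower :=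
    measurableSet_closedBall.inter (measurableSet_le (by fun_prop) measurable_const)
  have h_reflect : (fun y => (2 : ℝ) • c - y) ⁻¹' upper = lower := by
    ext y
    simp only [upper, lower, Set.mem_preimage, Set.mem_inter_iff, mem_closedBall,
      Set.mem_ofPred_eq, inner_sub_right, inner_smul_right, dist_eq_norm]
    rw [two_smul, add_sub_assoc, add_sub_cancel_left, ← norm_neg, neg_sub, ← dist_eq_norm]
    constructor <;> rintro ⟨h1, h2⟩ <;> exact ⟨h1, by linarith⟩
  have h_lower : μ lower = μ upper := by
    rw [← h_reflect]
    exact (Measure.measurePreserving_sub_left μ _).measure_preimage <|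
      (measurableSet_closedBall.inter (measurableSet_le measurable_const (by fun_prop)))
        |>.nullMeasurableSet
  have h_union : upper ∪ lower = closedBall c ρ := by
    rw [← Set.inter_union_distrib_left, Set.inter_eq_left]
    intro y _
    exact le_total a _
  have h_inter : μ (upper ∩ lower) = 0 :=
    measure_mono_null (fun y ⟨⟨_, h1⟩, ⟨_, h2⟩⟩ => le_antisymm h2 h1)
      (addHaar_setOf_inner_eq μ hu a)
  have := measure_union_add_inter (μ := μ) upper h_meas_lower
  rw [h_union, h_inter, add_zero, h_lower] at this
  rw [this, two_mul]

theorem two_mul_addHaar_closedBall_inter_inner_ge_le {u : E} (hu : ‖u‖ = 1) {r : ℝ}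
    (hr : 0 ≤ r) :
    2 * μ (closedBall 0 1 ∩ {y | r ≤ ⟪u, y⟫}) ≤
      ENNReal.ofReal (√(1 - r ^ 2) ^ finrank ℝ E) * μ (closedBall 0 1) := by
  have hu0 : u ≠ 0 := by rintro rfl; simp at hu
  have h_center : ⟪u, r • u⟫ = r := by
    rw [real_inner_smul_right, real_inner_self_eq_norm_sq, hu]; ring
  have h_sub : closedBall 0 1 ∩ {y | r ≤ ⟪u, y⟫} ⊆
      closedBall (r • u) √(1 - r ^ 2) ∩ {y | ⟪u, r • u⟫ ≤ ⟪u, y⟫} := by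
    rintro y ⟨hy, hyu⟩
    rw [mem_closedBall_zero_iff] at hy
    rw [Set.mem_ofPred_eq] at hyu
    refine ⟨?_, by rw [Set.mem_ofPred_eq, h_center]; exact hyu⟩
    rw [mem_closedBall, dist_eq_norm]
    apply Real.le_sqrt_of_sq_le
    rw [norm_sub_sq_real, real_inner_smul_right, real_inner_comm, norm_smul, hu,
      Real.norm_of_nonneg hr]
    nlinarith [pow_le_one₀ (n := 2) (norm_nonneg y) hy, mul_le_mul_of_nonneg_left hyu hr]
  calc 2 * μ (closedBall 0 1 ∩ {y | r ≤ ⟪u, y⟫})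
      ≤ 2 * μ (closedBall (r • u) √(1 - r ^ 2) ∩ {y | ⟪u, r • u⟫ ≤ ⟪u, y⟫}) := by
        gcongr
    _ = μ (closedBall (r • u) √(1 - r ^ 2)) :=
        two_mul_addHaar_closedBall_inter_halfspace μ hu0 _ _
    _ = _ := Measure.addHaar_closedBall' μ _ (Real.sqrt_nonneg _)

theorem cond_closedBall_inner_ge_le {x : E} (hx : x ≠ 0) {r : ℝ} (hr : 0 ≤ r) :
    μ[{y | r * ‖x‖ ≤ ⟪x, y⟫} | closedBall 0 1] ≤
      ENNReal.ofReal (√(1 - r ^ 2) ^ finrank ℝ E / 2) := by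
  have hx' : 0 < ‖x‖ := norm_pos_iff.2 hx
  have h_set : {y | r * ‖x‖ ≤ ⟪x, y⟫} = {y | r ≤ ⟪‖x‖⁻¹ • x, y⟫} := by
    ext y
    rw [Set.mem_ofPred_eq, Set.mem_ofPred_eq, real_inner_smul_left, ← div_eq_inv_mul,
      le_div_iff₀ hx']
  have h_ball_pos : μ (closedBall 0 1) ≠ 0 := (measure_closedBall_pos μ 0 one_pos).ne'
  have h_ball_fin : μ (closedBall 0 1) ≠ ⊤ := (measure_closedBall_lt_top (μ := μ)).ne
  rw [h_set, cond_apply measurableSet_closedBall, ENNReal.ofReal_div_of_pos two_pos,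
    ENNReal.ofReal_ofNat, ENNReal.le_div_iff_mul_le (by simp) (by simp), mul_comm, ← mul_assoc]
  calc 2 * (μ (closedBall 0 1))⁻¹ * μ (closedBall 0 1 ∩ {y | r ≤ ⟪‖x‖⁻¹ • x, y⟫})
      = (μ (closedBall 0 1))⁻¹ * (2 * μ (closedBall 0 1 ∩ {y | r ≤ ⟪‖x‖⁻¹ • x, y⟫})) := by
        ring
    _ ≤ (μ (closedBall 0 1))⁻¹ *
          (ENNReal.ofReal (√(1 - r ^ 2) ^ finrank ℝ E) * μ (closedBall 0 1)) := by
        gcongr _ * ?_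
        exact two_mul_addHaar_closedBall_inter_inner_ge_le μ (norm_smul_inv_norm (𝕜 := ℝ) hx) hr
    _ = ENNReal.ofReal (√(1 - r ^ 2) ^ finrank ℝ E) := by
        rw [mul_comm, mul_assoc, ENNReal.mul_inv_cancel h_ball_pos h_ball_fin, mul_one]

theorem ae_cond_closedBall_inner_ge_le [Nontrivial E] {r : ℝ} (hr : 0 ≤ r) :
    ∀ᵐ x ∂μ[|closedBall 0 1], μ[{y | r * ‖x‖ ≤ ⟪x, y⟫} | closedBall 0 1] ≤
      ENNReal.ofReal (√(1 - r ^ 2) ^ finrank ℝ E / 2) :=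
  ((Measure.ae_ne μ 0).filter_mono cond_absolutelyContinuous.ae_le).mono fun _ hx =>
    cond_closedBall_inner_ge_le μ hx hr

theorem cond_real_closedBall_closedBall {r : ℝ} (hr0 : 0 ≤ r) (hr1 : r ≤ 1) :
    (μ[|closedBall 0 1]).real (closedBall 0 r) = r ^ finrank ℝ E := by
  rw [measureReal_def, cond_apply measurableSet_closedBall,
    Set.inter_eq_right.2 (closedBall_subset_closedBall hr1),
    Measure.addHaar_closedBall' μ 0 hr0, mul_comm (ENNReal.ofReal _), ← mul_assoc,
    ENNReal.inv_mul_cancel (measure_closedBall_pos μ 0 one_pos).ne'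
      (measure_closedBall_lt_top (μ := μ)).ne,
    one_mul, ENNReal.toReal_ofReal (by positivity)]

end Geometry

section Probability

variable {Ω E ι : Type*} [MeasurableSpace Ω] [MeasurableSpace E] {P : Measure Ω}

theorem ProbabilityTheory.IndepFun.measure_mem_le_of_ae_slice_le [IsProbabilityMeasure P]
    {X Y : Ω → E} (hXY : IndepFun X Y P) (hX : Measurable X) (hY : Measurable Y)
    {A : Set (E × E)} (hA : MeasurableSet A)
    {p : ℝ≥0∞} (hslice : ∀ᵐ x ∂P.map X, P.map Y (Prod.mk x ⁻¹' A) ≤ p) :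
    P {ω | (X ω, Y ω) ∈ A} ≤ p := by
  have h_joint : P.map (fun ω => (X ω, Y ω)) = (P.map X).prod (P.map Y) :=
    (indepFun_iff_map_prod_eq_prod_map_map hX.aemeasurable hY.aemeasurable).1 hXY
  calc P {ω | (X ω, Y ω) ∈ A}
      = (P.map X).prod (P.map Y) A := by
        rw [← h_joint, Measure.map_apply (hX.prodMk hY) hA]; rfl
    _ = ∫⁻ x, P.map Y (Prod.mk x ⁻¹' A) ∂P.map X := Measure.prod_apply hA
    _ ≤ ∫⁻ _, p ∂P.map X := lintegral_mono_ae hslice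
    _ = p := by
        have := Measure.isProbabilityMeasure_map (μ := P) hX.aemeasurable
        simp

theorem measureReal_exists_ne_pair_mem_le [IsProbabilityMeasure P] [Fintype ι] {X : ι → Ω → E}
    (hX : ∀ i, Measurable (X i)) (hindep : iIndepFun X P) {μ : Measure E}
    (hlaw : ∀ i, P.map (X i) = μ) {A : Set (E × E)} (hA : MeasurableSet A) {q : ℝ}
    (hq : 0 ≤ q) (hslice : ∀ᵐ x ∂μ, μ (Prod.mk x ⁻¹' A) ≤ ENNReal.ofReal q) :
    P.real {ω | ∃ i j, i ≠ j ∧ (X i ω, X j ω) ∈ A} ≤ Fintype.card ι ^ 2 * q := by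
  have h_pair : ∀ i j, P.real {ω | i ≠ j ∧ (X i ω, X j ω) ∈ A} ≤ q := by
    intro i j
    by_cases hij : i = j
    · simp [hij, hq]
    simp only [hij, ne_eq, not_false_eq_true, true_and]
    refine ENNReal.toReal_le_of_le_ofReal hq ?_
    exact (hindep.indepFun hij).measure_mem_le_of_ae_slice_le (hX i) (hX j) hA
      (by rwa [hlaw, hlaw])
  have h_union : {ω | ∃ i j, i ≠ j ∧ (X i ω, X j ω) ∈ A} =
      ⋃ i, ⋃ j, {ω | i ≠ j ∧ (X i ω, X j ω) ∈ A} := by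
    ext; simp
  calc P.real {ω | ∃ i j, i ≠ j ∧ (X i ω, X j ω) ∈ A}
      ≤ ∑ i, ∑ j, P.real {ω | i ≠ j ∧ (X i ω, X j ω) ∈ A} := by
        rw [h_union]
        refine (measureReal_iUnion_fintype_le _).trans (Finset.sum_le_sum fun i _ => ?_)
        exact measureReal_iUnion_fintype_le _
    _ ≤ ∑ _ : ι, ∑ _ : ι, q := by gcongr with i _ j _; exact h_pair i j
    _ = Fintype.card ι ^ 2 * q := by
        simp only [Finset.sum_const, Finset.card_univ, nsmul_eq_mul]; ring

theorem measureReal_exists_mem_le [Fintype ι] {X : ι → Ω → E} (hX : ∀ i, Measurable (X i))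
    {μ : Measure E} (hlaw : ∀ i, P.map (X i) = μ) {S : Set E} (hS : MeasurableSet S) :
    P.real {ω | ∃ i, X i ω ∈ S} ≤ Fintype.card ι * μ.real S := by
  have h_union : {ω | ∃ i, X i ω ∈ S} = ⋃ i, X i ⁻¹' S := by ext; simp
  calc P.real {ω | ∃ i, X i ω ∈ S}
      ≤ ∑ i, P.real (X i ⁻¹' S) := h_union ▸ measureReal_iUnion_fintype_le _
    _ = ∑ _ : ι, μ.real S := by
        congr! 1 with i
        rw [← hlaw i, map_measureReal_apply (hX i) hS]
    _ = Fintype.card ι * μ.real S := by simp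

theorem one_sub_measureReal_le_of_compl_subset [IsProbabilityMeasure P] {s t : Set Ω}
    (h : tᶜ ⊆ s) : 1 - P.real t ≤ P.real s := by
  have := calc 1 = P.real (s ∪ sᶜ) := by rw [Set.union_compl_self, probReal_univ]
    _ ≤ P.real s + P.real sᶜ := measureReal_union_le _ _
    _ ≤ P.real s + P.real t := by linarith [measureReal_mono (μ := P) (Set.compl_subset_comm.1 h)]
  linarith

end Probability

theorem exists_inner_le_mul_inner_self {E ι : Type*} [NormedAddCommGroup E]
    [InnerProductSpace ℝ E] [Finite ι] {x : ι → E} {r : ℝ} (hnorm : ∀ i, r < ‖x i‖)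
    (hinner : ∀ i j, i ≠ j → ⟪x i, x j⟫ < r * ‖x i‖) :
    ∃ α, 0 < α ∧ α < 1 ∧ ∀ i j, i ≠ j → ⟪x i, x j⟫ ≤ α * ⟪x i, x i⟫ := by
  have h_near_one : ∀ᶠ α in 𝓝 (1 : ℝ), 0 < α ∧ ∀ i, r < α * ‖x i‖ :=
    (lt_mem_nhds one_pos).and <| Filter.eventually_all.2 fun i =>
      ((continuous_id.mul continuous_const).tendsto' 1 ‖x i‖ (one_mul _)).eventually_const_lt
        (hnorm i)
  obtain ⟨α, ⟨hα0, hα⟩, hα1⟩ :=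
    ((h_near_one.filter_mono nhdsWithin_le_nhds).and self_mem_nhdsWithin).exists (f := 𝓝[<] 1)
  refine ⟨α, hα0, hα1, fun i j hij => ?_⟩
  rw [real_inner_self_eq_norm_mul_norm, ← mul_assoc]
  exact (hinner i j hij).le.trans (mul_le_mul_of_nonneg_right (hα i).le (norm_nonneg _))

theorem half_mul_sq_add_mul_lt_of_lt {s b ϑ x : ℝ} (hs : 0 < s) (hb : 0 < b) (hx : 0 ≤ x)
    (h : x < b / s * (-1 + √(1 + 2 * ϑ * s / b ^ 2))) : s * x ^ 2 / 2 + b * x < ϑ := by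
  have h_lin : s * x + b < b * √(1 + 2 * ϑ * s / b ^ 2) := by
    rw [div_mul_eq_mul_div, lt_div_iff₀ hs] at h
    linarith
  have h_arg : 0 < 1 + 2 * ϑ * s / b ^ 2 :=
    Real.sqrt_pos.1 (pos_of_mul_pos_right ((by positivity : 0 < s * x + b).trans h_lin) hb.le)
  have h_sq : (s * x + b) ^ 2 < b ^ 2 + 2 * ϑ * s := by
    calc (s * x + b) ^ 2 < (b * √(1 + 2 * ϑ * s / b ^ 2)) ^ 2 :=
          pow_lt_pow_left₀ h_lin (by positivity) two_ne_zero
      _ = b ^ 2 + 2 * ϑ * s := by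
          rw [mul_pow, Real.sq_sqrt h_arg.le]; field_simp
  nlinarith

theorem stochastic_separation_pairwise_and_fisher_general
    (n M : ℕ) (hn : 0 < n)
    (r ϑ ρ : ℝ) (hr : 0 < r) (hr1 : r < 1)
    (hρ : ρ = Real.sqrt (1 - r ^ 2))
    (hMbound : (M : ℝ) <
      (r / ρ) ^ n * (-1 + Real.sqrt (1 + 2 * ϑ * ρ ^ n / r ^ (2 * n))))
    (Ω : Type*) [MeasurableSpace Ω] (P : Measure Ω) [IsProbabilityMeasure P]
    (X : Fin M → Ω → EuclideanSpace ℝ (Fin n))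
    (hmeas : ∀ i, Measurable (X i))
    (hindep : iIndepFun X P)
    (hdist : ∀ i, Measure.map (X i) P =
      (volume (Metric.closedBall (0 : EuclideanSpace ℝ (Fin n)) 1))⁻¹ •
        volume.restrict (Metric.closedBall (0 : EuclideanSpace ℝ (Fin n)) 1)) :
    (P {ω | ∀ i j : Fin M, i ≠ j → ⟪X i ω, X j ω⟫ < r * ‖X i ω‖}).toReal ≥ 1 - ϑ ∧
    (P {ω | ∃ α : ℝ, 0 < α ∧ α < 1 ∧
        ∀ i j : Fin M, i ≠ j →
          ⟪X i ω, X j ω⟫ ≤ α * ⟪X i ω, X i ω⟫}).toReal > 1 - ϑ := by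
  have hd : finrank ℝ (EuclideanSpace ℝ (Fin n)) = n := finrank_euclideanSpace_fin
  have : Nonempty (Fin n) := ⟨⟨0, hn⟩⟩
  have hρ0 : 0 < ρ := hρ ▸ Real.sqrt_pos.2 (by nlinarith)
  have hlaw : ∀ i, P.map (X i) = volume[|closedBall 0 1] := hdist
  set A := {p : EuclideanSpace ℝ (Fin n) × EuclideanSpace ℝ (Fin n) | r * ‖p.1‖ ≤ ⟪p.1, p.2⟫}
  set close_pair := {ω | ∃ i j, i ≠ j ∧ (X i ω, X j ω) ∈ A}
  set short := {ω | ∃ i, X i ω ∈ closedBall 0 r}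
  have h_close_pair : P.real close_pair ≤ M ^ 2 * (ρ ^ n / 2) := by
    have := measureReal_exists_ne_pair_mem_le hmeas hindep hlaw (A := A)
      (measurableSet_le (by fun_prop) (by fun_prop)) (by positivity)
      (ae_cond_closedBall_inner_ge_le volume hr.le)
    rwa [hd, ← hρ, Fintype.card_fin] at this
  have h_short : P.real short ≤ M * r ^ n := by
    have := measureReal_exists_mem_le hmeas hlaw (measurableSet_closedBall (x := 0) (ε := r))
    rwa [cond_real_closedBall_closedBall volume hr.le hr1.le, hd, Fintype.card_fin] at this
  have h_count : ρ ^ n * M ^ 2 / 2 + r ^ n * M < ϑ := by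
    refine half_mul_sq_add_mul_lt_of_lt (by positivity) (by positivity) M.cast_nonneg ?_
    rwa [div_pow, mul_comm 2 n, pow_mul] at hMbound
  have h_union := measureReal_union_le (μ := P) close_pair short
  have h_short_nonneg : 0 ≤ r ^ n * M := by positivity
  simp only [← measureReal_def]
  constructor
  · refine le_trans (by linarith) (one_sub_measureReal_le_of_compl_subset (t := close_pair)
      fun ω hω => ?_)
    simpa only [Set.mem_ofPred_eq, Set.mem_compl_iff, not_exists, not_and, not_le, close_pair,
      A] using hω
  · refine lt_of_lt_of_le (by linarith) (one_sub_measureReal_le_of_compl_subset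
      (t := close_pair ∪ short) fun ω hω => ?_)
    simp only [Set.mem_ofPred_eq, mem_closedBall, dist_zero_right, Set.compl_union,
      Set.mem_inter_iff, Set.mem_compl_iff, not_exists, not_and, not_le, close_pair, A, short] at hω
    exact exists_inner_le_mul_inner_self hω.2 hω.1

/-- Corollary 1, second part: if `M < (r/ρ)ⁿ(-1 + √(1 + 2ϑρⁿ/r^{2n}))`, then with
probability `≥ 1 - ϑ` all pairwise inequalities `⟪xᵢ, xⱼ⟫ < r ‖xᵢ‖` (`i ≠ j`) hold for `M`
i.i.d. points uniform in the unit ball; in particular the set `{x₁, …, x_M}` is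
Fisher-separable (for some threshold `α ∈ (0,1)`) with probability `> 1 - ϑ`. -/
theorem stochastic_separation_pairwise_and_fisher
    (n M : ℕ) (hn : 0 < n) (hM : 0 < M)
    (r ϑ ρ : ℝ) (hr : 0 < r) (hr1 : r < 1) (hϑ : 0 < ϑ) (hϑ1 : ϑ < 1)
    (hρ : ρ = Real.sqrt (1 - r ^ 2))
    (hMbound : (M : ℝ) <
      (r / ρ) ^ n * (-1 + Real.sqrt (1 + 2 * ϑ * ρ ^ n / r ^ (2 * n))))
    (Ω : Type*) [MeasurableSpace Ω] (P : Measure Ω) [IsProbabilityMeasure P]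
    (X : Fin M → Ω → EuclideanSpace ℝ (Fin n))
    (hmeas : ∀ i, Measurable (X i))
    (hindep : iIndepFun X P)
    (hdist : ∀ i, Measure.map (X i) P =
      (volume (Metric.closedBall (0 : EuclideanSpace ℝ (Fin n)) 1))⁻¹ •
        volume.restrict (Metric.closedBall (0 : EuclideanSpace ℝ (Fin n)) 1)) :
    (P {ω | ∀ i j : Fin M, i ≠ j → ⟪X i ω, X j ω⟫ < r * ‖X i ω‖}).toReal ≥ 1 - ϑ ∧
    (P {ω | ∃ α : ℝ, 0 < α ∧ α < 1 ∧
        ∀ i j : Fin M, i ≠ j →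
          ⟪X i ω, X j ω⟫ ≤ α * ⟪X i ω, X i ω⟫}).toReal > 1 - ϑ :=
  stochastic_separation_pairwise_and_fisher_general n M hn r ϑ ρ hr hr1 hρ hMbound Ω P X hmeas
    hindep hdist
end

section
/- Let x₁, …, x_M be i.i.d. random vectors in ℝⁿ whose coordinates X₁, …, Xₙ are independent random variables satisfying 0 ≤ Xᵢ ≤ 1 with variances σᵢ² > σ₀² > 0, centralised so that each coordinate has zero mean (i.e., the mean of each original coordinate is subtracted). Set R₀² = Σᵢ σᵢ² ≥ n σ₀², and let 0 < δ < 2/3. Then P( 1 − δ ≤ ‖xⱼ‖²/R₀² ≤ 1 + δ for all j, and (xᵢ, x_M)/(R₀ ‖x_M‖) < √(1 − δ) for all i ≠ M ) ≥ 1 − 2M exp(−2δ² R₀⁴ / n) − (M − 1) exp(−2 R₀⁴ (2 − 3δ)² / n). -/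
/-!
Each coordinate lives in an interval of length one and has mean zero, so by Hoeffding's lemma
it is sub-Gaussian with parameter `1/4`; the same holds for the centred squares
`xᵢ² - σᵢ²`. Hoeffding's inequality for the independent coordinates then bounds the
probability that `‖x‖²` deviates from `R₀²` by `δ R₀²` by `2 exp(-2δ²R₀⁴/n)`, and the
probability that `(x, z) ≥ √(1-δ) R₀ ‖z‖` for a fixed `z ≠ 0` by `exp(-2(1-δ)R₀²)`.
Conditioning on `x_M` (independence) turns the latter into a bound for `(xᵢ, x_M)`, and since
`σᵢ² ≤ 1/4` forces `R₀² ≤ n/4`, it is at most `exp(-2R₀⁴(2-3δ)²/n)`. A union bound over the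
`M` norms and the `M - 1` inner products concludes.
-/

open MeasureTheory ProbabilityTheory RealInnerProductSpace
open Real Set
open scoped NNReal

lemma measureReal_preimage_le_map {α β : Type*} [MeasurableSpace α] [MeasurableSpace β]
    {μ : Measure α} [IsFiniteMeasure μ] {f : α → β} (hf : AEMeasurable f μ) (s : Set β) :
    μ.real (f ⁻¹' s) ≤ (μ.map f).real s :=
  ENNReal.toReal_mono (measure_ne_top _ _) (Measure.le_map_apply hf s)

lemma measureReal_pi_sum_ge_le {ι : Type*} [Fintype ι] {ν : ι → Measure ℝ}
    [∀ i, IsProbabilityMeasure (ν i)] {g : ι → ℝ → ℝ} {c : ι → ℝ≥0}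
    (hg : ∀ i, HasSubgaussianMGF (g i) (c i) (ν i)) {ε : ℝ} (hε : 0 ≤ ε) :
    (Measure.pi ν).real {y | ε ≤ ∑ i, g i (y i)} ≤ exp (-ε ^ 2 / (2 * ∑ i, (c i : ℝ))) := by
  have hcoord (i : ι) : HasSubgaussianMGF (fun y : ι → ℝ => g i (y i)) (c i) (Measure.pi ν) :=
    HasSubgaussianMGF.of_map (measurable_pi_apply i).aemeasurable
      (by rw [(measurePreserving_eval ν i).map_eq]; exact hg i)
  simpa using HasSubgaussianMGF.measure_sum_ge_le_of_iIndepFun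
    (iIndepFun_pi fun i => (hg i).aemeasurable) (s := Finset.univ) (fun i _ => hcoord i) hε

section UnitInterval

variable {μ : Measure ℝ} [IsProbabilityMeasure μ] {a : ℝ}

lemma zero_mem_Icc_of_ae_mem_Icc_of_integral_eq_zero {b : ℝ} (h : ∀ᵐ x ∂μ, x ∈ Icc a b)
    (hμ : ∫ x, x ∂μ = 0) : (0 : ℝ) ∈ Icc a b :=
  hμ ▸ (convex_Icc a b).integral_mem isClosed_Icc h (Integrable.of_mem_Icc a b aemeasurable_id h)

lemma ae_abs_le_one_of_ae_mem_Icc (h : ∀ᵐ x ∂μ, x ∈ Icc a (a + 1)) (hμ : ∫ x, x ∂μ = 0) :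
    ∀ᵐ x ∂μ, |x| ≤ 1 := by
  obtain ⟨ha₀, ha₁⟩ := zero_mem_Icc_of_ae_mem_Icc_of_integral_eq_zero h hμ
  filter_upwards [h] with x ⟨hx₀, hx₁⟩
  exact abs_le.2 ⟨by linarith, by linarith⟩

lemma integral_sq_le_of_ae_mem_Icc (h : ∀ᵐ x ∂μ, x ∈ Icc a (a + 1)) (hμ : ∫ x, x ∂μ = 0) :
    ∫ x, x ^ 2 ∂μ ≤ 1 / 4 := by
  convert variance_le_sq_of_bounded h aemeasurable_id using 1
  · exact (variance_of_integral_eq_zero aemeasurable_id hμ).symm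
  · norm_num

lemma hasSubgaussianMGF_of_ae_mem_Icc (h : ∀ᵐ x ∂μ, x ∈ Icc a (a + 1)) (hμ : ∫ x, x ∂μ = 0) :
    HasSubgaussianMGF (fun x => x) (1 / 4) μ := by
  convert hasSubgaussianMGF_of_mem_Icc_of_integral_eq_zero (X := fun x => x) aemeasurable_id h hμ
  norm_num

lemma hasSubgaussianMGF_sq_sub_of_ae_abs_le_one {s : ℝ} (h : ∀ᵐ x ∂μ, |x| ≤ 1)
    (hvar : ∫ x, x ^ 2 ∂μ = s) : HasSubgaussianMGF (fun x => x ^ 2 - s) (1 / 4) μ := by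
  have hsq_mem : ∀ᵐ x ∂μ, x ^ 2 ∈ Icc 0 1 := by
    filter_upwards [h] with x hx
    exact ⟨sq_nonneg x, by nlinarith [abs_le.1 hx]⟩
  have hmem : ∀ᵐ x ∂μ, x ^ 2 - s ∈ Icc (-s) (-s + 1) := by
    filter_upwards [hsq_mem] with x hx
    constructor <;> linarith [hx.1, hx.2]
  have hmean : ∫ x, (x ^ 2 - s) ∂μ = 0 := by
    rw [integral_sub (Integrable.of_mem_Icc 0 1 (by fun_prop) hsq_mem) (integrable_const _), hvar]
    simp
  convert hasSubgaussianMGF_of_mem_Icc_of_integral_eq_zero (by fun_prop) hmem hmean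
  norm_num

end UnitInterval

section IndependentCoordinates

variable {ι : Type*} [Fintype ι] {ν : ι → Measure ℝ} [∀ i, IsProbabilityMeasure (ν i)]

lemma measureReal_map_toLp_inner_ge_le {c : ℝ≥0}
    (hν : ∀ i, HasSubgaussianMGF (fun x => x) c (ν i)) (z : EuclideanSpace ℝ ι) {ε : ℝ}
    (hε : 0 ≤ ε) :
    ((Measure.pi ν).map (MeasurableEquiv.toLp 2 (ι → ℝ))).real {x | ε ≤ ⟪x, z⟫} ≤
      exp (-ε ^ 2 / (2 * c * ‖z‖ ^ 2)) := by
  rw [measureReal_def, MeasurableEquiv.map_apply, ← measureReal_def]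
  convert measureReal_pi_sum_ge_le (fun i => (hν i).const_mul (z i)) hε using 3
  · simp [PiLp.inner_apply]
  · simp only [EuclideanSpace.norm_sq_eq, Real.norm_eq_abs, sq_abs, Finset.mul_sum]
    -- `HasSubgaussianMGF.const_mul` writes the parameter `z i ^ 2 * c` as a raw subtype element
    exact Finset.sum_congr rfl fun i _ => by
      change _ = 2 * (z i ^ 2 * (c : ℝ))
      ring

lemma measureReal_map_toLp_inner_ge_mul_norm_le {c : ℝ≥0}
    (hν : ∀ i, HasSubgaussianMGF (fun x => x) c (ν i)) {r : ℝ} (hr : 0 ≤ r)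
    {z : EuclideanSpace ℝ ι} (hz : z ≠ 0) :
    ((Measure.pi ν).map (MeasurableEquiv.toLp 2 (ι → ℝ))).real {x | r * ‖z‖ ≤ ⟪x, z⟫} ≤
      exp (-r ^ 2 / (2 * c)) := by
  refine (measureReal_map_toLp_inner_ge_le hν z (by positivity)).trans_eq ?_
  have : ‖z‖ ≠ 0 := norm_ne_zero_iff.2 hz
  rw [mul_pow, mul_comm (2 * (c : ℝ)), ← div_div, neg_div, neg_div,
    mul_div_cancel_right₀ _ (by positivity), neg_div]

lemma measureReal_map_toLp_abs_norm_sq_sub_ge_le {s : ι → ℝ} (hν : ∀ i, ∀ᵐ x ∂ν i, |x| ≤ 1)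
    (hvar : ∀ i, ∫ x, x ^ 2 ∂ν i = s i) {ε : ℝ} (hε : 0 ≤ ε) :
    ((Measure.pi ν).map (MeasurableEquiv.toLp 2 (ι → ℝ))).real {x | ε ≤ |‖x‖ ^ 2 - ∑ i, s i|} ≤
      2 * exp (-2 * ε ^ 2 / Fintype.card ι) := by
  have hsq (i : ι) := hasSubgaussianMGF_sq_sub_of_ae_abs_le_one (hν i) (hvar i)
  have hcover : MeasurableEquiv.toLp 2 (ι → ℝ) ⁻¹' {x | ε ≤ |‖x‖ ^ 2 - ∑ i, s i|} ⊆
      {y | ε ≤ ∑ i, (y i ^ 2 - s i)} ∪ {y | ε ≤ ∑ i, -(y i ^ 2 - s i)} := by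
    intro y hy
    simp only [mem_preimage, mem_ofPred_eq, EuclideanSpace.norm_sq_eq,
      MeasurableEquiv.coe_toLp] at hy
    simp only [mem_union, mem_ofPred_eq, Finset.sum_neg_distrib,
      Finset.sum_sub_distrib]
    exact le_abs.1 (by simpa only [Real.norm_eq_abs, sq_abs] using hy)
  rw [measureReal_def, MeasurableEquiv.map_apply, ← measureReal_def]
  calc _ ≤ _ := measureReal_mono hcover
    _ ≤ _ := measureReal_union_le _ _
    _ ≤ _ := add_le_add (measureReal_pi_sum_ge_le hsq hε)
        (measureReal_pi_sum_ge_le (fun i => (hsq i).neg) hε)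
    _ = _ := by
      rw [← two_mul]
      congr 2
      simp only [Finset.sum_const, Finset.card_univ, nsmul_eq_mul, NNReal.coe_div, NNReal.coe_one,
        NNReal.coe_ofNat]
      ring

lemma measureReal_map_toLp_norm_sq_div_notMem_Icc_le {s : ι → ℝ}
    (hν : ∀ i, ∀ᵐ x ∂ν i, |x| ≤ 1) (hvar : ∀ i, ∫ x, x ^ 2 ∂ν i = s i) {R δ : ℝ}
    (hR : R ^ 2 = ∑ i, s i) (hR₀ : R ≠ 0) (hδ : 0 ≤ δ) :
    ((Measure.pi ν).map (MeasurableEquiv.toLp 2 (ι → ℝ))).real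
        {x | 1 - δ ≤ ‖x‖ ^ 2 / R ^ 2 ∧ ‖x‖ ^ 2 / R ^ 2 ≤ 1 + δ}ᶜ ≤
      2 * exp (-2 * δ ^ 2 * R ^ 4 / Fintype.card ι) := by
  refine (measureReal_mono fun x hx => ?_).trans
    ((measureReal_map_toLp_abs_norm_sq_sub_ge_le hν hvar (ε := δ * R ^ 2)
      (by positivity)).trans_eq (by ring_nf))
  rw [mem_ofPred_eq, ← hR]
  simp only [mem_compl_iff, mem_ofPred_eq, not_and_or, not_le] at hx
  rcases hx with h | h
  · rw [div_lt_iff₀ (by positivity)] at h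
    exact le_abs.2 (Or.inr (by linarith))
  · rw [lt_div_iff₀ (by positivity)] at h
    exact le_abs.2 (Or.inl (by linarith))

end IndependentCoordinates

section Separation

variable {Ω E : Type*} [MeasurableSpace Ω] {P : Measure Ω} [IsProbabilityMeasure P]
  [NormedAddCommGroup E] [InnerProductSpace ℝ E] [MeasurableSpace E] [BorelSpace E]
  [SecondCountableTopology E]

lemma measureReal_inner_ge_le_of_indepFun {X Y : Ω → E} (hX : Measurable X) (hY : Measurable Y)
    (hXY : IndepFun X Y P) {r q : ℝ} (hq : 0 ≤ q)
    (h : ∀ z ≠ 0, (P.map X).real {x | r * ‖z‖ ≤ ⟪x, z⟫} ≤ q) :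
    P.real {ω | Y ω ≠ 0 ∧ r * ‖Y ω‖ ≤ ⟪X ω, Y ω⟫} ≤ q := by
  set S : Set (E × E) := {p | p.2 ≠ 0 ∧ r * ‖p.2‖ ≤ ⟪p.1, p.2⟫}
  have hS : MeasurableSet S :=
    (measurableSet_singleton 0).compl.preimage measurable_snd |>.inter <|
      measurableSet_le (measurable_snd.norm.const_mul r)
        (continuous_fst.inner continuous_snd).measurable
  have hslice (z : E) : P.map X ((fun x => (x, z)) ⁻¹' S) ≤ ENNReal.ofReal q := by
    by_cases hz : z = 0
    · simp [S, hz]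
    · rw [ENNReal.le_ofReal_iff_toReal_le (measure_ne_top _ _) hq]
      simpa [S, hz, Measure.real] using h z hz
  have hpair : P {ω | Y ω ≠ 0 ∧ r * ‖Y ω‖ ≤ ⟪X ω, Y ω⟫} = ((P.map X).prod (P.map Y)) S := by
    rw [← (indepFun_iff_map_prod_eq_prod_map_map hX.aemeasurable hY.aemeasurable).1 hXY,
      Measure.map_apply (hX.prodMk hY) hS]
    rfl
  refine ENNReal.toReal_le_of_le_ofReal hq ?_
  rw [hpair, Measure.prod_apply_symm hS]
  calc _ ≤ ∫⁻ _, ENNReal.ofReal q ∂(P.map Y) := lintegral_mono hslice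
    _ = ENNReal.ofReal q := by simp [Measure.map_apply hY MeasurableSet.univ]

theorem le_measureReal_separation {M : ℕ} {X : Fin M → Ω → E} (hX : ∀ i, Measurable (X i))
    (hindep : iIndepFun X P) {μ : Measure E} (hlaw : ∀ i, P.map (X i) = μ) {A : Set E}
    {r s q₁ q₂ : ℝ} (hr : 0 < r) (hs : 0 < s) (hq₂ : 0 ≤ q₂) (hA : μ.real Aᶜ ≤ q₁)
    (hinner : ∀ z ≠ 0, μ.real {x | r * s * ‖z‖ ≤ ⟪x, z⟫} ≤ q₂) (k : Fin M) :
    1 - M * q₁ - (M - 1) * q₂ ≤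
      P.real {ω | (∀ j, X j ω ∈ A) ∧ ∀ i, i ≠ k → ⟪X i ω, X k ω⟫ / (s * ‖X k ω‖) < r} := by
  set G := {ω | (∀ j, X j ω ∈ A) ∧ ∀ i, i ≠ k → ⟪X i ω, X k ω⟫ / (s * ‖X k ω‖) < r}
  set Bnorm := ⋃ j, X j ⁻¹' Aᶜ
  set Binner := ⋃ i ∈ Finset.univ.erase k, {ω | X k ω ≠ 0 ∧ r * s * ‖X k ω‖ ≤ ⟪X i ω, X k ω⟫}
  have hcover : Gᶜ ⊆ Bnorm ∪ Binner := by
    intro ω hω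
    simp only [G, mem_compl_iff, mem_ofPred_eq, not_and_or, not_forall] at hω
    rcases hω with ⟨j, hj⟩ | ⟨i, hik, hi⟩
    · exact Or.inl (mem_iUnion.2 ⟨j, hj⟩)
    · have hk : X k ω ≠ 0 := fun h => by simp [h, hr] at hi
      refine Or.inr (mem_biUnion (Finset.mem_erase.2 ⟨hik, Finset.mem_univ i⟩) ⟨hk, ?_⟩)
      rwa [not_lt, le_div_iff₀ (by positivity), ← mul_assoc] at hi
  have hnorm : P.real Bnorm ≤ M * q₁ := by
    refine (measureReal_iUnion_fintype_le _).trans ?_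
    calc _ ≤ ∑ _j : Fin M, q₁ := Finset.sum_le_sum fun j _ =>
          (measureReal_preimage_le_map (hX j).aemeasurable _).trans (hlaw j ▸ hA)
      _ = M * q₁ := by simp
  have hangle : P.real Binner ≤ (M - 1) * q₂ := by
    refine (measureReal_biUnion_finset_le _ _).trans ?_
    calc _ ≤ ∑ _i ∈ Finset.univ.erase k, q₂ := Finset.sum_le_sum fun i hi =>
          measureReal_inner_ge_le_of_indepFun (hX i) (hX k)
            (hindep.indepFun (Finset.ne_of_mem_erase hi)) hq₂ fun z hz => hlaw i ▸ hinner z hz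
      _ = (M - 1) * q₂ := by
          rw [Finset.sum_const, Finset.card_erase_of_mem (Finset.mem_univ k)]
          simp [Nat.cast_sub (Fin.pos k)]
  -- subadditivity rather than `prob_compl_eq_one_sub`, so that `G` need not be measurable
  have huniv : 1 ≤ P.real G + P.real Gᶜ := by
    simpa [union_compl_self] using measureReal_union_le (μ := P) G Gᶜ
  linarith [measureReal_mono hcover (μ := P), measureReal_union_le (μ := P) Bnorm Binner]

end Separation

lemma pow_four_mul_two_sub_three_mul_sq_le {R n δ : ℝ} (hR : 4 * R ^ 2 ≤ n) (hδ₀ : 0 ≤ δ)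
    (hδ₁ : δ ≤ 8 / 9) : R ^ 4 * (2 - 3 * δ) ^ 2 ≤ (1 - δ) * R ^ 2 * n := by
  have hδsq : (2 - 3 * δ) ^ 2 ≤ 4 * (1 - δ) := by nlinarith
  calc R ^ 4 * (2 - 3 * δ) ^ 2 ≤ R ^ 4 * (4 * (1 - δ)) := by gcongr
    _ = (1 - δ) * R ^ 2 * (4 * R ^ 2) := by ring
    _ ≤ (1 - δ) * R ^ 2 * n :=
      mul_le_mul_of_nonneg_left hR (mul_nonneg (by linarith) (sq_nonneg R))

theorem stochastic_separation_product_cube_single_general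
    (n M : ℕ) (hn : 0 < n) (hM : 0 < M)
    (σ : Fin n → ℝ)
    (m : Fin n → ℝ) (ν : Fin n → Measure ℝ) (hνprob : ∀ i, IsProbabilityMeasure (ν i))
    (hsupp : ∀ i, ν i {x : ℝ | x + m i ∈ Set.Icc (0 : ℝ) 1} = 1)
    (hmean : ∀ i, ∫ x, x ∂(ν i) = 0)
    (hvar : ∀ i, ∫ x, x ^ 2 ∂(ν i) = σ i ^ 2)
    (R₀ : ℝ) (hR₀pos : 0 < R₀) (hR₀ : R₀ ^ 2 = ∑ i, σ i ^ 2)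
    (δ : ℝ) (hδ : 0 < δ) (hδ1 : δ < 2 / 3)
    (Ω : Type*) [MeasurableSpace Ω] (P : Measure Ω) [IsProbabilityMeasure P]
    (X : Fin M → Ω → EuclideanSpace ℝ (Fin n))
    (hmeas : ∀ i, Measurable (X i))
    (hindep : iIndepFun X P)
    (hdist : ∀ i, Measure.map (X i) P =
      (Measure.pi ν).map (MeasurableEquiv.toLp 2 (Fin n → ℝ))) :
    (P {ω | (∀ j : Fin M, 1 - δ ≤ ‖X j ω‖ ^ 2 / R₀ ^ 2 ∧ ‖X j ω‖ ^ 2 / R₀ ^ 2 ≤ 1 + δ) ∧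
        ∀ i : Fin M, i ≠ ⟨M - 1, Nat.sub_lt hM Nat.one_pos⟩ →
          ⟪X i ω, X (⟨M - 1, Nat.sub_lt hM Nat.one_pos⟩ : Fin M) ω⟫ /
            (R₀ * ‖X (⟨M - 1, Nat.sub_lt hM Nat.one_pos⟩ : Fin M) ω‖) <
          Real.sqrt (1 - δ)}).toReal ≥
      1 - 2 * (M : ℝ) * Real.exp (-2 * δ ^ 2 * R₀ ^ 4 / n) -
        ((M : ℝ) - 1) * Real.exp (-2 * R₀ ^ 4 * (2 - 3 * δ) ^ 2 / n) := by
  have hcube (i : Fin n) : ∀ᵐ x ∂ν i, x ∈ Icc (-m i) (-m i + 1) := by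
    filter_upwards [(ae_iff_prob_eq_one (by measurability)).2 (hsupp i)] with x ⟨h₀, h₁⟩
    exact ⟨by linarith, by linarith⟩
  have hR₀n : 4 * R₀ ^ 2 ≤ n := by
    rw [hR₀, Finset.mul_sum]
    calc ∑ i, 4 * σ i ^ 2 ≤ ∑ _i : Fin n, (1 : ℝ) := Finset.sum_le_sum fun i _ => by
          linarith [hvar i ▸ integral_sq_le_of_ae_mem_Icc (hcube i) (hmean i)]
      _ = n := by simp
  have hexp : -(√(1 - δ) * R₀) ^ 2 / (2 * ((1 / 4 : ℝ≥0) : ℝ)) ≤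
      -2 * R₀ ^ 4 * (2 - 3 * δ) ^ 2 / n := by
    rw [mul_pow, Real.sq_sqrt (by linarith), le_div_iff₀ (by exact_mod_cast hn)]
    norm_num
    nlinarith [pow_four_mul_two_sub_three_mul_sq_le hR₀n hδ.le (by linarith)]
  refine (le_measureReal_separation hmeas hindep hdist (Real.sqrt_pos.2 (by linarith)) hR₀pos
    (exp_pos _).le (measureReal_map_toLp_norm_sq_div_notMem_Icc_le
      (fun i => ae_abs_le_one_of_ae_mem_Icc (hcube i) (hmean i)) hvar hR₀ hR₀pos.ne' hδ.le)
    (fun z hz => (measureReal_map_toLp_inner_ge_mul_norm_le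
      (fun i => hasSubgaussianMGF_of_ae_mem_Icc (hcube i) (hmean i)) (by positivity) hz).trans
        (exp_le_exp.2 hexp)) _).trans' (le_of_eq ?_)
  simp only [Fintype.card_fin]
  ring

/-- Theorem 3, inequality (12) (product distribution in a cube): for i.i.d. vectors
whose coordinates are independent, take values in `[0,1]` before centralisation, have
zero mean after centralisation and variances `σᵢ² > σ₀² > 0`, with `R₀² = Σᵢ σᵢ²` and
`0 < δ < 2/3`, the norms concentrate and the last point is separated from the others
with probability at least
`1 - 2M exp(-2δ²R₀⁴/n) - (M-1) exp(-2R₀⁴(2-3δ)²/n)`. -/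
theorem stochastic_separation_product_cube_single
    (n M : ℕ) (hn : 0 < n) (hM : 0 < M)
    (σ : Fin n → ℝ) (σ₀ : ℝ) (hσ₀ : 0 < σ₀) (hσ : ∀ i, σ₀ ^ 2 < σ i ^ 2)
    (m : Fin n → ℝ) (ν : Fin n → Measure ℝ) (hνprob : ∀ i, IsProbabilityMeasure (ν i))
    (hsupp : ∀ i, ν i {x : ℝ | x + m i ∈ Set.Icc (0 : ℝ) 1} = 1)
    (hmean : ∀ i, ∫ x, x ∂(ν i) = 0)
    (hvar : ∀ i, ∫ x, x ^ 2 ∂(ν i) = σ i ^ 2)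
    (R₀ : ℝ) (hR₀pos : 0 < R₀) (hR₀ : R₀ ^ 2 = ∑ i, σ i ^ 2)
    (δ : ℝ) (hδ : 0 < δ) (hδ1 : δ < 2 / 3)
    (Ω : Type*) [MeasurableSpace Ω] (P : Measure Ω) [IsProbabilityMeasure P]
    (X : Fin M → Ω → EuclideanSpace ℝ (Fin n))
    (hmeas : ∀ i, Measurable (X i))
    (hindep : iIndepFun X P)
    (hdist : ∀ i, Measure.map (X i) P =
      (Measure.pi ν).map (MeasurableEquiv.toLp 2 (Fin n → ℝ))) :
    (P {ω | (∀ j : Fin M, 1 - δ ≤ ‖X j ω‖ ^ 2 / R₀ ^ 2 ∧ ‖X j ω‖ ^ 2 / R₀ ^ 2 ≤ 1 + δ) ∧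
        ∀ i : Fin M, i ≠ ⟨M - 1, Nat.sub_lt hM Nat.one_pos⟩ →
          ⟪X i ω, X (⟨M - 1, Nat.sub_lt hM Nat.one_pos⟩ : Fin M) ω⟫ /
            (R₀ * ‖X (⟨M - 1, Nat.sub_lt hM Nat.one_pos⟩ : Fin M) ω‖) <
          Real.sqrt (1 - δ)}).toReal ≥
      1 - 2 * (M : ℝ) * Real.exp (-2 * δ ^ 2 * R₀ ^ 4 / n) -
        ((M : ℝ) - 1) * Real.exp (-2 * R₀ ^ 4 * (2 - 3 * δ) ^ 2 / n) :=
  stochastic_separation_product_cube_single_general n M hn hM σ m ν hνprob hsupp hmean hvar R₀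
    hR₀pos hR₀ δ hδ hδ1 Ω P X hmeas hindep hdist
end

section
/- Let x₁, …, x_M be i.i.d. random vectors in ℝⁿ whose coordinates X₁, …, Xₙ are independent random variables satisfying 0 ≤ Xᵢ ≤ 1 with variances σᵢ² > σ₀² > 0, centralised so that each coordinate has zero mean. Set R₀² = Σᵢ σᵢ² ≥ n σ₀², and let 0 < δ < 2/3. Then P( 1 − δ ≤ ‖xⱼ‖²/R₀² ≤ 1 + δ for all j, and (xᵢ, xⱼ)/(R₀ ‖xⱼ‖) < √(1 − δ) for all i ≠ j ) ≥ 1 − 2M exp(−2δ² R₀⁴ / n) − M(M − 1) exp(−2 R₀⁴ (2 − 3δ)² / n). -/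
/-!
Both `‖xⱼ‖² = ∑ₖ xⱼₖ²` and `‖xᵢ - xⱼ‖² = ∑ₖ (xᵢₖ - xⱼₖ)²` are sums of `n` independent terms,
each confined to an interval of length one, with means `R₀²` and `2R₀²`. Hoeffding's inequality
bounds the probability that the first deviates by `δR₀²` by `exp(-2δ²R₀⁴/n)` (on either side),
and the probability that the second falls to `3δR₀²` by `exp(-2(2 - 3δ)²R₀⁴/n)`; a union bound
over the `2M` norm events and the `M(M - 1)` ordered pairs gives the stated probability. Outside
these events the polarisation identity `2(xᵢ, xⱼ) = ‖xᵢ‖² + ‖xⱼ‖² - ‖xᵢ - xⱼ‖²` yields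
`(xᵢ, xⱼ) < √(1 - δ) R₀ ‖xⱼ‖`, which only needs `δ ≤ 4/5`.
-/

open MeasureTheory ProbabilityTheory RealInnerProductSpace
open Real Set

theorem measureReal_pi_sum_integral_add_le_sum_le {ι : Type*} [Fintype ι] {α : ι → Type*}
    [∀ i, MeasurableSpace (α i)] {μ : ∀ i, Measure (α i)} [∀ i, IsProbabilityMeasure (μ i)]
    {f : ∀ i, α i → ℝ} (hf : ∀ i, Measurable (f i)) {a : ι → ℝ}
    (hfa : ∀ i, ∀ᵐ x ∂μ i, f i x ∈ Icc (a i) (a i + 1)) {ε : ℝ} (hε : 0 ≤ ε) :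
    (Measure.pi μ).real {x | ∑ i, ∫ y, f i y ∂μ i + ε ≤ ∑ i, f i (x i)} ≤
      exp (-2 * ε ^ 2 / Fintype.card ι) := by
  have hsubG (i : ι) : HasSubgaussianMGF (fun x : ∀ i, α i ↦ f i (x i) - ∫ y, f i y ∂μ i)
      (1 / 4) (Measure.pi μ) := by
    have h : HasSubgaussianMGF (fun y ↦ f i y - ∫ y, f i y ∂μ i) (1 / 4)
        ((Measure.pi μ).map (Function.eval i)) := by
      rw [(measurePreserving_eval μ i).map_eq]
      convert hasSubgaussianMGF_of_mem_Icc (hf i).aemeasurable (hfa i)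
      norm_num
    exact h.of_map (measurable_pi_apply i).aemeasurable
  have h := HasSubgaussianMGF.measure_sum_ge_le_of_iIndepFun
    (iIndepFun_pi fun i ↦ ((hf i).sub_const _).aemeasurable) (s := Finset.univ)
    (fun i _ ↦ hsubG i) hε
  convert h using 2
  · ext x
    simp only [mem_ofPred_eq, Finset.sum_sub_distrib]
    constructor <;> intro <;> linarith
  · push_cast [Finset.sum_const, Finset.card_univ, nsmul_eq_mul]
    ring

theorem ae_mem_Icc_of_measure_add_mem_Icc_eq_one {ν : Measure ℝ} [IsProbabilityMeasure ν] {m : ℝ}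
    (h : ν {x | x + m ∈ Icc 0 1} = 1) : ∀ᵐ x ∂ν, x ∈ Icc (-m) (-m + 1) := by
  have h' : ∀ᵐ x ∂ν, x + m ∈ Icc 0 1 := (ae_iff_measure_eq (measurableSet_Icc.preimage
    (measurable_add_const m)).nullMeasurableSet).2 (h.trans measure_univ.symm)
  filter_upwards [h'] with x hx
  exact ⟨by linarith [hx.1], by linarith [hx.2]⟩

theorem ae_abs_le_one_of_integral_eq_zero {ν : Measure ℝ} [IsProbabilityMeasure ν] {a : ℝ}
    (h : ∀ᵐ x ∂ν, x ∈ Icc a (a + 1)) (hmean : ∫ x, x ∂ν = 0) : ∀ᵐ x ∂ν, |x| ≤ 1 := by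
  have hint := Integrable.of_mem_Icc a (a + 1) aemeasurable_id h
  have ha : a ≤ 0 := by
    simpa [hmean] using integral_mono_ae (integrable_const a) hint (h.mono fun x hx ↦ hx.1)
  have ha' : 0 ≤ a + 1 := by
    simpa [hmean] using integral_mono_ae hint (integrable_const _) (h.mono fun x hx ↦ hx.2)
  filter_upwards [h] with x hx
  exact abs_le.2 ⟨by linarith [hx.1], by linarith [hx.2]⟩

theorem integral_sub_sq_prod {μ ν : Measure ℝ} [IsProbabilityMeasure μ] [IsProbabilityMeasure ν]
    (hμ₁ : Integrable (fun x ↦ x) μ) (hμ₂ : Integrable (fun x ↦ x ^ 2) μ)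
    (hν₁ : Integrable (fun x ↦ x) ν) (hν₂ : Integrable (fun x ↦ x ^ 2) ν) :
    ∫ z, (z.1 - z.2) ^ 2 ∂μ.prod ν =
      ∫ x, x ^ 2 ∂μ + ∫ x, x ^ 2 ∂ν - 2 * ((∫ x, x ∂μ) * ∫ x, x ∂ν) := by
  have h₁ : Integrable (fun z : ℝ × ℝ ↦ z.1 ^ 2) (μ.prod ν) := hμ₂.comp_fst ν
  have h₂ : Integrable (fun z : ℝ × ℝ ↦ z.2 ^ 2) (μ.prod ν) := hν₂.comp_snd μ
  have h₁₂ : Integrable (fun z : ℝ × ℝ ↦ 2 * (z.1 * z.2)) (μ.prod ν) :=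
    (hμ₁.mul_prod hν₁).const_mul 2
  have hsq : Integrable (fun z : ℝ × ℝ ↦ z.1 ^ 2 + z.2 ^ 2) (μ.prod ν) := h₁.add h₂
  calc ∫ z, (z.1 - z.2) ^ 2 ∂μ.prod ν
      = ∫ z, (z.1 ^ 2 + z.2 ^ 2 - 2 * (z.1 * z.2)) ∂μ.prod ν := by congr with z; ring
    _ = _ := by
      rw [integral_sub hsq h₁₂, integral_add h₁ h₂, integral_const_mul,
        integral_fun_fst (fun x ↦ x ^ 2), integral_fun_snd (fun x ↦ x ^ 2),
        integral_prod_mul (fun x ↦ x) (fun x ↦ x)]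
      simp

section Law

variable {ι : Type*} [Fintype ι] {ν : ι → Measure ℝ} {Ω : Type*} [MeasurableSpace Ω]
  {P : Measure Ω} {Y Y' : Ω → EuclideanSpace ℝ ι}

theorem measureReal_norm_sq_mem_eq (hY : Measurable Y)
    (hlaw : P.map Y = (Measure.pi ν).map (MeasurableEquiv.toLp 2 (ι → ℝ)))
    {S : Set ℝ} (hS : MeasurableSet S) :
    P.real {ω | ‖Y ω‖ ^ 2 ∈ S} = (Measure.pi ν).real {y | ∑ i, y i ^ 2 ∈ S} := by
  have hT : MeasurableSet {v : EuclideanSpace ℝ ι | ‖v‖ ^ 2 ∈ S} :=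
    (measurable_norm.pow_const 2) hS
  rw [← Set.preimage_ofPred_eq (p := fun v ↦ ‖v‖ ^ 2 ∈ S), ← map_measureReal_apply hY hT, hlaw,
    map_measureReal_apply (MeasurableEquiv.measurable _) hT]
  simp [Set.preimage, EuclideanSpace.real_norm_sq_eq]

theorem measureReal_norm_sub_sq_mem_eq [IsFiniteMeasure P] [∀ i, SigmaFinite (ν i)]
    (hY : Measurable Y) (hY' : Measurable Y') (hind : IndepFun Y Y' P)
    (hlaw : P.map Y = (Measure.pi ν).map (MeasurableEquiv.toLp 2 (ι → ℝ)))
    (hlaw' : P.map Y' = (Measure.pi ν).map (MeasurableEquiv.toLp 2 (ι → ℝ)))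
    {S : Set ℝ} (hS : MeasurableSet S) :
    P.real {ω | ‖Y ω - Y' ω‖ ^ 2 ∈ S} =
      (Measure.pi fun i ↦ (ν i).prod (ν i)).real {w | ∑ i, ((w i).1 - (w i).2) ^ 2 ∈ S} := by
  set e := MeasurableEquiv.toLp 2 (ι → ℝ)
  have hT : MeasurableSet {p : EuclideanSpace ℝ ι × EuclideanSpace ℝ ι | ‖p.1 - p.2‖ ^ 2 ∈ S} :=
    (((measurable_fst.sub measurable_snd).norm).pow_const 2) hS
  have hlaw₂ : P.map (fun ω ↦ (Y ω, Y' ω)) =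
      ((Measure.pi fun i ↦ (ν i).prod (ν i)).map
        (MeasurableEquiv.arrowProdEquivProdArrow ℝ ℝ ι)).map (Prod.map e e) := by
    rw [hind.map_prod_eq_prod_map_map hY.aemeasurable hY'.aemeasurable, hlaw, hlaw',
      Measure.map_prod_map _ _ e.measurable e.measurable,
      (measurePreserving_arrowProdEquivProdArrow ℝ ℝ ι ν ν).map_eq]
  rw [← Set.preimage_ofPred_eq (p := fun p : EuclideanSpace ℝ ι × EuclideanSpace ℝ ι ↦
      ‖p.1 - p.2‖ ^ 2 ∈ S) (f := fun ω ↦ (Y ω, Y' ω)),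
    ← map_measureReal_apply (hY.prodMk hY') hT, hlaw₂,
    map_measureReal_apply (e.measurable.prodMap e.measurable) hT,
    map_measureReal_apply (MeasurableEquiv.measurable _) (e.measurable.prodMap e.measurable hT)]
  simp [Set.preimage, EuclideanSpace.real_norm_sq_eq, MeasurableEquiv.arrowProdEquivProdArrow,
    Equiv.arrowProdEquivProdArrow, e]

end Law

section Tails

variable {ι : Type*} [Fintype ι] {ν : ι → Measure ℝ} [∀ i, IsProbabilityMeasure (ν i)]
  {Ω : Type*} [MeasurableSpace Ω] {P : Measure Ω} {Y Y' : Ω → EuclideanSpace ℝ ι} {ε : ℝ}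

theorem measureReal_sum_integral_sq_add_le_norm_sq_le (hY : Measurable Y)
    (hlaw : P.map Y = (Measure.pi ν).map (MeasurableEquiv.toLp 2 (ι → ℝ)))
    (hν : ∀ i, ∀ᵐ x ∂ν i, |x| ≤ 1) (hε : 0 ≤ ε) :
    P.real {ω | ∑ i, ∫ x, x ^ 2 ∂ν i + ε ≤ ‖Y ω‖ ^ 2} ≤ exp (-2 * ε ^ 2 / Fintype.card ι) := by
  refine (measureReal_norm_sq_mem_eq hY hlaw measurableSet_Ici).trans_le ?_
  refine measureReal_pi_sum_integral_add_le_sum_le (fun _ ↦ measurable_id.pow_const 2)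
    (a := 0) (fun i ↦ ?_) hε
  filter_upwards [hν i] with x hx
  exact ⟨sq_nonneg x, by simpa using (sq_le_one_iff_abs_le_one x).2 hx⟩

theorem measureReal_norm_sq_le_sum_integral_sq_sub_le (hY : Measurable Y)
    (hlaw : P.map Y = (Measure.pi ν).map (MeasurableEquiv.toLp 2 (ι → ℝ)))
    (hν : ∀ i, ∀ᵐ x ∂ν i, |x| ≤ 1) (hε : 0 ≤ ε) :
    P.real {ω | ‖Y ω‖ ^ 2 ≤ ∑ i, ∫ x, x ^ 2 ∂ν i - ε} ≤ exp (-2 * ε ^ 2 / Fintype.card ι) := by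
  have hbound (i : ι) : ∀ᵐ x ∂ν i, -x ^ 2 ∈ Icc (-1) (-1 + 1) := by
    filter_upwards [hν i] with x hx
    have := (sq_le_one_iff_abs_le_one x).2 hx
    exact ⟨by linarith, by simp [sq_nonneg]⟩
  have h := measureReal_pi_sum_integral_add_le_sum_le (f := fun _ x ↦ -x ^ 2)
    (fun _ ↦ (measurable_id.pow_const 2).neg) hbound hε
  refine (measureReal_norm_sq_mem_eq hY hlaw measurableSet_Iic).trans_le
    (le_of_eq_of_le (congrArg _ ?_) h)
  ext y
  simp only [mem_ofPred_eq, mem_Iic, integral_neg, Finset.sum_neg_distrib]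
  constructor <;> intro <;> linarith

theorem measureReal_norm_sub_sq_le_two_mul_sum_integral_sq_sub_le [IsFiniteMeasure P]
    (hY : Measurable Y) (hY' : Measurable Y') (hind : IndepFun Y Y' P)
    (hlaw : P.map Y = (Measure.pi ν).map (MeasurableEquiv.toLp 2 (ι → ℝ)))
    (hlaw' : P.map Y' = (Measure.pi ν).map (MeasurableEquiv.toLp 2 (ι → ℝ)))
    {a : ι → ℝ} (hν : ∀ i, ∀ᵐ x ∂ν i, x ∈ Icc (a i) (a i + 1))
    (hmean : ∀ i, ∫ x, x ∂ν i = 0) (hε : 0 ≤ ε) :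
    P.real {ω | ‖Y ω - Y' ω‖ ^ 2 ≤ 2 * ∑ i, ∫ x, x ^ 2 ∂ν i - ε} ≤
      exp (-2 * ε ^ 2 / Fintype.card ι) := by
  have hmoment (i : ι) : ∫ z, (z.1 - z.2) ^ 2 ∂(ν i).prod (ν i) = 2 * ∫ x, x ^ 2 ∂ν i := by
    have hx : MemLp (fun x ↦ x) 2 (ν i) := memLp_of_bounded (hν i) aestronglyMeasurable_id 2
    rw [integral_sub_sq_prod (hx.integrable one_le_two) hx.integrable_sq (hx.integrable one_le_two)
      hx.integrable_sq, hmean]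
    ring
  have hbound (i : ι) : ∀ᵐ z ∂(ν i).prod (ν i), -(z.1 - z.2) ^ 2 ∈ Icc (-1) (-1 + 1) := by
    filter_upwards [Measure.quasiMeasurePreserving_fst.ae (hν i),
      Measure.quasiMeasurePreserving_snd.ae (hν i)] with z h₁ h₂
    have : |z.1 - z.2| ≤ 1 := abs_le.2 ⟨by linarith [h₁.1, h₂.2], by linarith [h₁.2, h₂.1]⟩
    have := (sq_le_one_iff_abs_le_one _).2 this
    exact ⟨by linarith, by simp [sq_nonneg]⟩
  have h := measureReal_pi_sum_integral_add_le_sum_le (μ := fun i ↦ (ν i).prod (ν i))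
    (f := fun _ z ↦ -(z.1 - z.2) ^ 2)
    (fun _ ↦ ((measurable_fst.sub measurable_snd).pow_const 2).neg) hbound hε
  refine (measureReal_norm_sub_sq_mem_eq hY hY' hind hlaw hlaw' measurableSet_Iic).trans_le
    (le_of_eq_of_le (congrArg _ ?_) h)
  ext w
  simp only [mem_ofPred_eq, mem_Iic, integral_neg, hmoment, Finset.sum_neg_distrib,
    Finset.mul_sum]
  constructor <;> intro <;> linarith

end Tails

theorem one_sub_le_measureReal_forall_notMem {Ω ι : Type*} [MeasurableSpace Ω] {P : Measure Ω}
    [IsProbabilityMeasure P] [Fintype ι] (A : ι → Set Ω) (B : ι → ι → Set Ω) {a b : ℝ}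
    (hA : ∀ j, P.real (A j) ≤ a) (hB : ∀ i j, i ≠ j → P.real (B i j) ≤ b) :
    1 - Fintype.card ι * a - Fintype.card ι * (Fintype.card ι - 1) * b ≤
      P.real {ω | (∀ j, ω ∉ A j) ∧ ∀ i j, i ≠ j → ω ∉ B i j} := by
  classical
  set G := {ω | (∀ j, ω ∉ A j) ∧ ∀ i j, i ≠ j → ω ∉ B i j}
  have hcover : Gᶜ ⊆ (⋃ j, A j) ∪ ⋃ p ∈ Finset.univ.offDiag, B p.1 p.2 := by
    intro ω hω
    simp only [G, mem_compl_iff, mem_ofPred_eq, not_and_or, not_forall, not_not] at hω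
    simp only [mem_union, mem_iUnion, Finset.mem_offDiag, Finset.mem_univ, true_and]
    rcases hω with ⟨j, hj⟩ | ⟨i, j, hij, hB⟩
    · exact Or.inl ⟨j, hj⟩
    · exact Or.inr ⟨(i, j), hij, hB⟩
  have hA' : P.real (⋃ j, A j) ≤ Fintype.card ι * a :=
    (measureReal_iUnion_fintype_le _).trans
      ((Finset.sum_le_card_nsmul _ _ _ fun j _ ↦ hA j).trans_eq (by simp))
  have hB' : P.real (⋃ p ∈ Finset.univ.offDiag, B p.1 p.2) ≤
      Fintype.card ι * (Fintype.card ι - 1) * b := by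
    refine (measureReal_biUnion_finset_le _ _).trans
      ((Finset.sum_le_card_nsmul _ _ _ fun p hp ↦ hB _ _ (Finset.mem_offDiag.1 hp).2.2).trans_eq ?_)
    rw [Finset.offDiag_card, nsmul_eq_mul, Nat.cast_sub (Nat.le_mul_self _)]
    simp only [Finset.card_univ, Nat.cast_mul]
    ring
  have hG : 1 ≤ P.real G + P.real Gᶜ := by
    simpa using measureReal_union_le (μ := P) G Gᶜ
  linarith [measureReal_mono (μ := P) hcover, measureReal_union_le (μ := P) (⋃ j, A j)
    (⋃ p ∈ Finset.univ.offDiag, B p.1 p.2)]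

theorem sq_sub_mul_le_of_sq_bounds {δ r s u : ℝ} (hδ : δ ≤ 4 / 5) (hr : 0 ≤ r) (hs : 0 ≤ s)
    (hu : 0 ≤ u) (hu2 : u ^ 2 = 1 - δ) (hlo : (1 - δ) * r ^ 2 < s ^ 2)
    (hhi : s ^ 2 < (1 + δ) * r ^ 2) :
    (s - u * r) ^ 2 ≤ δ * r ^ 2 := by
  have hδ0 : 0 < δ := by nlinarith
  set w := √δ
  have hw : 0 ≤ w := sqrt_nonneg δ
  have hw2 : w ^ 2 = δ := sq_sqrt hδ0.le
  have hur : u * r ≤ s := by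
    refine (pow_le_pow_iff_left₀ (by positivity) hs two_ne_zero).1 ?_
    nlinarith
  -- `(u + w)² = 1 + 2uw` dominates `1 + δ` exactly when `δ² ≤ 4δ(1 - δ)`, i.e. `δ ≤ 4/5`
  have hδuw : δ ≤ 2 * u * w := by
    refine (pow_le_pow_iff_left₀ hδ0.le (by positivity) two_ne_zero).1 ?_
    nlinarith
  have hsuw : s ≤ (u + w) * r := by
    refine (pow_le_pow_iff_left₀ hs (by positivity) two_ne_zero).1 ?_
    nlinarith
  nlinarith

theorem inner_div_lt_sqrt_one_sub {E : Type*} [NormedAddCommGroup E] [InnerProductSpace ℝ E]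
    {x y : E} {r δ : ℝ} (hr : 0 < r) (hδ : δ ≤ 4 / 5) (hx : ‖x‖ ^ 2 < (1 + δ) * r ^ 2)
    (hylo : (1 - δ) * r ^ 2 < ‖y‖ ^ 2) (hyhi : ‖y‖ ^ 2 < (1 + δ) * r ^ 2)
    (hxy : 3 * δ * r ^ 2 < ‖x - y‖ ^ 2) :
    ⟪x, y⟫ / (r * ‖y‖) < √(1 - δ) := by
  have hu2 : √(1 - δ) ^ 2 = 1 - δ := sq_sqrt (by linarith)
  have hy : 0 < ‖y‖ := by
    refine (norm_nonneg y).lt_of_ne' fun h ↦ ?_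
    rw [h] at hylo
    nlinarith
  have hkey := sq_sub_mul_le_of_sq_bounds hδ hr.le hy.le (sqrt_nonneg _) hu2 hylo hyhi
  rw [div_lt_iff₀ (by positivity)]
  nlinarith [norm_sub_sq_real x y]

theorem norm_sq_div_mem_and_inner_div_lt_sqrt_one_sub {E ι : Type*} [NormedAddCommGroup E]
    [InnerProductSpace ℝ E] {x : ι → E} {r δ : ℝ} (hr : 0 < r) (hδ : δ ≤ 4 / 5)
    (hnorm : ∀ j, (1 - δ) * r ^ 2 < ‖x j‖ ^ 2 ∧ ‖x j‖ ^ 2 < (1 + δ) * r ^ 2)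
    (hsep : ∀ i j, i ≠ j → 3 * δ * r ^ 2 < ‖x i - x j‖ ^ 2) :
    (∀ j, 1 - δ ≤ ‖x j‖ ^ 2 / r ^ 2 ∧ ‖x j‖ ^ 2 / r ^ 2 ≤ 1 + δ) ∧
      ∀ i j, i ≠ j → ⟪x i, x j⟫ / (r * ‖x j‖) < √(1 - δ) := by
  refine ⟨fun j ↦ ⟨?_, ?_⟩, fun i j hij ↦
    inner_div_lt_sqrt_one_sub hr hδ (hnorm i).2 (hnorm j).1 (hnorm j).2 (hsep i j hij)⟩
  · rw [le_div_iff₀ (by positivity)]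
    exact (hnorm j).1.le
  · rw [div_le_iff₀ (by positivity)]
    exact (hnorm j).2.le

theorem stochastic_separation_product_cube_all_general
    (n M : ℕ)
    (σ : Fin n → ℝ)
    (m : Fin n → ℝ) (ν : Fin n → Measure ℝ) (hνprob : ∀ i, IsProbabilityMeasure (ν i))
    (hsupp : ∀ i, ν i {x : ℝ | x + m i ∈ Set.Icc (0 : ℝ) 1} = 1)
    (hmean : ∀ i, ∫ x, x ∂(ν i) = 0)
    (hvar : ∀ i, ∫ x, x ^ 2 ∂(ν i) = σ i ^ 2)
    (R₀ : ℝ) (hR₀pos : 0 < R₀) (hR₀ : R₀ ^ 2 = ∑ i, σ i ^ 2)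
    (δ : ℝ) (hδ : 0 < δ) (hδ1 : δ < 2 / 3)
    (Ω : Type*) [MeasurableSpace Ω] (P : Measure Ω) [IsProbabilityMeasure P]
    (X : Fin M → Ω → EuclideanSpace ℝ (Fin n))
    (hmeas : ∀ i, Measurable (X i))
    (hindep : iIndepFun X P)
    (hdist : ∀ i, Measure.map (X i) P =
      (Measure.pi ν).map (MeasurableEquiv.toLp 2 (Fin n → ℝ))) :
    (P {ω | (∀ j : Fin M, 1 - δ ≤ ‖X j ω‖ ^ 2 / R₀ ^ 2 ∧ ‖X j ω‖ ^ 2 / R₀ ^ 2 ≤ 1 + δ) ∧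
        ∀ i j : Fin M, i ≠ j →
          ⟪X i ω, X j ω⟫ / (R₀ * ‖X j ω‖) < Real.sqrt (1 - δ)}).toReal ≥
      1 - 2 * (M : ℝ) * Real.exp (-2 * δ ^ 2 * R₀ ^ 4 / n) -
        (M : ℝ) * ((M : ℝ) - 1) * Real.exp (-2 * R₀ ^ 4 * (2 - 3 * δ) ^ 2 / n) := by
  have hsum : ∑ i, ∫ x, x ^ 2 ∂ν i = R₀ ^ 2 := by simp only [hvar, hR₀]
  have hbox (i : Fin n) := ae_mem_Icc_of_measure_add_mem_Icc_eq_one (hsupp i)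
  have habs (i : Fin n) := ae_abs_le_one_of_integral_eq_zero (hbox i) (hmean i)
  have hnorm (j : Fin M) : P.real ({ω | R₀ ^ 2 + δ * R₀ ^ 2 ≤ ‖X j ω‖ ^ 2} ∪
      {ω | ‖X j ω‖ ^ 2 ≤ R₀ ^ 2 - δ * R₀ ^ 2}) ≤ 2 * exp (-2 * δ ^ 2 * R₀ ^ 4 / n) := by
    have hup := measureReal_sum_integral_sq_add_le_norm_sq_le (hmeas j) (hdist j) habs
      (ε := δ * R₀ ^ 2) (by positivity)
    have hlo := measureReal_norm_sq_le_sum_integral_sq_sub_le (hmeas j) (hdist j) habs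
      (ε := δ * R₀ ^ 2) (by positivity)
    rw [hsum] at hup hlo
    refine (measureReal_union_le _ _).trans ((add_le_add hup hlo).trans_eq ?_)
    simp only [Fintype.card_fin]
    ring_nf
  have hpair (i j : Fin M) (hij : i ≠ j) : P.real {ω | ‖X i ω - X j ω‖ ^ 2 ≤
      2 * R₀ ^ 2 - (2 - 3 * δ) * R₀ ^ 2} ≤ exp (-2 * R₀ ^ 4 * (2 - 3 * δ) ^ 2 / n) := by
    have h := measureReal_norm_sub_sq_le_two_mul_sum_integral_sq_sub_le (hmeas i) (hmeas j)
      (hindep.indepFun hij) (hdist i) (hdist j) hbox hmean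
      (ε := (2 - 3 * δ) * R₀ ^ 2) (by nlinarith)
    rw [hsum] at h
    refine h.trans_eq ?_
    simp only [Fintype.card_fin]
    ring_nf
  refine ge_iff_le.2 (le_trans ?_ ((one_sub_le_measureReal_forall_notMem _ _ hnorm hpair).trans
    (measureReal_mono fun ω hω ↦ norm_sq_div_mem_and_inner_div_lt_sqrt_one_sub hR₀pos
      (by linarith) (fun j ↦ ?_) (fun i j hij ↦ ?_))))
  · simp only [Fintype.card_fin]
    linarith
  · have := hω.1 j
    simp only [mem_union, mem_ofPred_eq, not_or, not_le] at this
    constructor <;> linarith [this.1, this.2]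
  · have := hω.2 i j hij
    simp only [mem_ofPred_eq, not_le] at this
    linarith

/-- Theorem 3, inequality (13) (product distribution in a cube): for i.i.d. vectors
whose coordinates are independent, take values in `[0,1]` before centralisation, have
zero mean after centralisation and variances `σᵢ² > σ₀² > 0`, with `R₀² = Σᵢ σᵢ²` and
`0 < δ < 2/3`, the norms concentrate and all points are pairwise separated with
probability at least `1 - 2M exp(-2δ²R₀⁴/n) - M(M-1) exp(-2R₀⁴(2-3δ)²/n)`. -/
theorem stochastic_separation_product_cube_all
    (n M : ℕ) (hn : 0 < n) (hM : 0 < M)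
    (σ : Fin n → ℝ) (σ₀ : ℝ) (hσ₀ : 0 < σ₀) (hσ : ∀ i, σ₀ ^ 2 < σ i ^ 2)
    (m : Fin n → ℝ) (ν : Fin n → Measure ℝ) (hνprob : ∀ i, IsProbabilityMeasure (ν i))
    (hsupp : ∀ i, ν i {x : ℝ | x + m i ∈ Set.Icc (0 : ℝ) 1} = 1)
    (hmean : ∀ i, ∫ x, x ∂(ν i) = 0)
    (hvar : ∀ i, ∫ x, x ^ 2 ∂(ν i) = σ i ^ 2)
    (R₀ : ℝ) (hR₀pos : 0 < R₀) (hR₀ : R₀ ^ 2 = ∑ i, σ i ^ 2)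
    (δ : ℝ) (hδ : 0 < δ) (hδ1 : δ < 2 / 3)
    (Ω : Type*) [MeasurableSpace Ω] (P : Measure Ω) [IsProbabilityMeasure P]
    (X : Fin M → Ω → EuclideanSpace ℝ (Fin n))
    (hmeas : ∀ i, Measurable (X i))
    (hindep : iIndepFun X P)
    (hdist : ∀ i, Measure.map (X i) P =
      (Measure.pi ν).map (MeasurableEquiv.toLp 2 (Fin n → ℝ))) :
    (P {ω | (∀ j : Fin M, 1 - δ ≤ ‖X j ω‖ ^ 2 / R₀ ^ 2 ∧ ‖X j ω‖ ^ 2 / R₀ ^ 2 ≤ 1 + δ) ∧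
        ∀ i j : Fin M, i ≠ j →
          ⟪X i ω, X j ω⟫ / (R₀ * ‖X j ω‖) < Real.sqrt (1 - δ)}).toReal ≥
      1 - 2 * (M : ℝ) * Real.exp (-2 * δ ^ 2 * R₀ ^ 4 / n) -
        (M : ℝ) * ((M : ℝ) - 1) * Real.exp (-2 * R₀ ^ 4 * (2 - 3 * δ) ^ 2 / n) :=
  stochastic_separation_product_cube_all_general n M σ m ν hνprob hsupp hmean hvar R₀ hR₀pos hR₀ δ
    hδ hδ1 Ω P X hmeas hindep hdist
end

section
/- Let x₁, …, x_M be M vectors (stimuli contents) lying in the closed ball in ℝⁿ with centre c and radius ρ > 0. Let 0 < ψ < 1, 1/2 < α < 1, and M < ψ (2α)ⁿ. Let x_{M+1} be sampled from the uniform (equi-)distribution in this ball. Define w = x_{M+1} − c and θ = α (w, w) + (w, c). Then with probability greater than 1 − ψ the linear threshold neuron (w, θ) detects selectively the stimulus x_{M+1} and rejects all other stimuli: (w, x_{M+1}) > θ and (w, xᵢ) ≤ θ for all i = 1, …, M. -/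
/-!
Write `z = c + w`. The neuron fails to detect `z` only if `(1 - α) ‖w‖² ≤ 0`, i.e. `z = c`, a null
event. It fails to reject `xᵢ` only if `α ‖w‖² < ⟪w, xᵢ - c⟫`, which places `z` in the ball of
centre `c + (xᵢ - c) / (2α)` and radius `R / (2α)`; that ball carries a fraction `(2α)⁻ⁿ` of the
volume of the ball of radius `R`. A union bound over the `M` stimuli bounds the probability of
failure by `M (2α)⁻ⁿ < ψ`.
-/

open MeasureTheory RealInnerProductSpace Metric ProbabilityTheory Module

section InnerProduct

variable {E : Type*} [NormedAddCommGroup E] [InnerProductSpace ℝ E] {α R : ℝ} {c w y z : E}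

theorem norm_two_mul_smul_sub_le (hα : 0 ≤ α) (h : α * ‖w‖ ^ 2 ≤ ⟪w, y⟫) :
    ‖(2 * α) • w - y‖ ≤ ‖y‖ := by
  have key : ‖(2 * α) • w - y‖ ^ 2 = ‖y‖ ^ 2 - 4 * α * (⟪w, y⟫ - α * ‖w‖ ^ 2) := by
    rw [norm_sub_sq_real, norm_smul, real_inner_smul_left, Real.norm_of_nonneg (by positivity)]
    ring
  exact pow_le_pow_iff_left₀ (norm_nonneg _) (norm_nonneg _) two_ne_zero |>.mp
    (by nlinarith [key])

theorem eq_of_inner_sub_le_threshold (hα : α < 1)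
    (h : ⟪z - c, z⟫ ≤ α * ⟪z - c, z - c⟫ + ⟪z - c, c⟫) : z = c := by
  have hz : ⟪z - c, z⟫ = ⟪z - c, z - c⟫ + ⟪z - c, c⟫ := by
    rw [← inner_add_right, sub_add_cancel]
  have : ⟪z - c, z - c⟫ ≤ 0 := by nlinarith [real_inner_self_nonneg (x := z - c)]
  exact sub_eq_zero.mp (real_inner_self_nonpos.mp this)

theorem mem_closedBall_of_threshold_lt_inner (hα : 0 < α) (hy : y ∈ closedBall c R)
    (h : α * ⟪z - c, z - c⟫ + ⟪z - c, c⟫ < ⟪z - c, y⟫) :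
    z ∈ closedBall (c + (2 * α)⁻¹ • (y - c)) ((2 * α)⁻¹ * R) := by
  have hcap : α * ‖z - c‖ ^ 2 ≤ ⟪z - c, y - c⟫ := by
    rw [← real_inner_self_eq_norm_sq, inner_sub_right (z - c) y c]
    linarith
  have h2α : 0 < 2 * α := by positivity
  rw [mem_closedBall_iff_norm] at hy ⊢
  calc ‖z - (c + (2 * α)⁻¹ • (y - c))‖
      = ‖(2 * α)⁻¹ • ((2 * α) • (z - c) - (y - c))‖ := by
        rw [smul_sub (2 * α)⁻¹ ((2 * α) • (z - c)), inv_smul_smul₀ h2α.ne']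
        congr 1; abel
    _ = (2 * α)⁻¹ * ‖(2 * α) • (z - c) - (y - c)‖ := by
        rw [norm_smul, Real.norm_of_nonneg (inv_nonneg.mpr h2α.le)]
    _ ≤ (2 * α)⁻¹ * R := by
        gcongr
        exact (norm_two_mul_smul_sub_le hα.le hcap).trans hy

end InnerProduct

section AddHaar

variable {E : Type*} [NormedAddCommGroup E] [NormedSpace ℝ E] [FiniteDimensional ℝ E]
  [MeasurableSpace E] [BorelSpace E] (μ : Measure E) [μ.IsAddHaarMeasure]

theorem measureReal_cond_closedBall_iUnion_closedBall_le {ι : Type*} [Fintype ι] (c : E)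
    (p : ι → E) {r R : ℝ} (hr : 0 ≤ r) (hR : 0 < R) :
    (μ[|closedBall c R]).real (⋃ i, closedBall (p i) (r * R)) ≤
      Fintype.card ι * r ^ finrank ℝ E := by
  have hpos : μ (closedBall c R) ≠ 0 := (measure_closedBall_pos μ c hR).ne'
  have hfin : μ (closedBall c R) ≠ ⊤ := (isCompact_closedBall c R).measure_lt_top.ne
  refine ENNReal.toReal_le_of_le_ofReal (by positivity) ?_
  rw [cond_apply measurableSet_closedBall, ENNReal.ofReal_mul (by positivity),
    ENNReal.ofReal_natCast]
  calc (μ (closedBall c R))⁻¹ * μ (closedBall c R ∩ ⋃ i, closedBall (p i) (r * R))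
      ≤ (μ (closedBall c R))⁻¹ * ∑ i, μ (closedBall (p i) (r * R)) := by
        gcongr
        exact (measure_mono Set.inter_subset_right).trans (measure_iUnion_fintype_le μ _)
    _ = Fintype.card ι * ENNReal.ofReal (r ^ finrank ℝ E) *
          ((μ (closedBall c R))⁻¹ * μ (closedBall c R)) := by
        simp only [Measure.addHaar_closedBall_mul μ _ hr hR.le,
          ← Measure.addHaar_closedBall_center μ c, Finset.sum_const, Finset.card_univ, nsmul_eq_mul]
        ring
    _ = Fintype.card ι * ENNReal.ofReal (r ^ finrank ℝ E) := by
        rw [ENNReal.inv_mul_cancel hpos hfin, mul_one]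

end AddHaar

theorem single_neuron_selectivity_general
    (n M : ℕ) (hn : 0 < n)
    (c : EuclideanSpace ℝ (Fin n)) (R : ℝ) (hR : 0 < R)
    (x : Fin M → EuclideanSpace ℝ (Fin n))
    (hx : ∀ i, x i ∈ Metric.closedBall c R)
    (ψ α : ℝ) (hα : 1 / 2 < α) (hα1 : α < 1)
    (hM : (M : ℝ) < ψ * (2 * α) ^ n)
    (μ : Measure (EuclideanSpace ℝ (Fin n)))
    (hμ : μ = (volume (Metric.closedBall c R))⁻¹ • volume.restrict (Metric.closedBall c R)) :
    (μ {z | ⟪z - c, z⟫ > α * ⟪z - c, z - c⟫ + ⟪z - c, c⟫ ∧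
        ∀ i : Fin M, ⟪z - c, x i⟫ ≤ α * ⟪z - c, z - c⟫ + ⟪z - c, c⟫}).toReal >
      1 - ψ := by
  replace hμ : μ = volume[|closedBall c R] := hμ
  have : IsProbabilityMeasure μ := hμ ▸ cond_isProbabilityMeasure_of_finite
    (measure_closedBall_pos volume c hR).ne' (isCompact_closedBall c R).measure_lt_top.ne
  have : Nontrivial (EuclideanSpace ℝ (Fin n)) :=
    nontrivial_of_finrank_pos (R := ℝ) (by simpa using hn)
  have h2α : 0 < 2 * α := by linarith
  set G := {z | ⟪z - c, z⟫ > α * ⟪z - c, z - c⟫ + ⟪z - c, c⟫ ∧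
    ∀ i : Fin M, ⟪z - c, x i⟫ ≤ α * ⟪z - c, z - c⟫ + ⟪z - c, c⟫}
  set caps := ⋃ i, closedBall (c + (2 * α)⁻¹ • (x i - c)) ((2 * α)⁻¹ * R)
  have hfail : Gᶜ ⊆ {c} ∪ caps := by
    intro z hz
    simp only [G, Set.mem_compl_iff, Set.mem_ofPred_eq, not_and_or, gt_iff_lt, not_lt,
      not_forall, not_le] at hz
    rcases hz with hz | ⟨i, hi⟩
    · exact Or.inl (eq_of_inner_sub_le_threshold hα1 hz)
    · exact Or.inr <| Set.mem_iUnion.mpr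
        ⟨i, mem_closedBall_of_threshold_lt_inner (by linarith) (hx i) hi⟩
  have hc : μ.real {c} = 0 := by
    simp [measureReal_def, hμ, cond_absolutelyContinuous (measure_singleton c)]
  have hcaps : μ.real caps ≤ M * ((2 * α)⁻¹) ^ n := by
    simpa [hμ, caps] using measureReal_cond_closedBall_iUnion_closedBall_le volume c
      (fun i ↦ c + (2 * α)⁻¹ • (x i - c)) (inv_nonneg.mpr h2α.le) hR
  have hsmall : (M : ℝ) * ((2 * α)⁻¹) ^ n < ψ := by
    rwa [inv_pow, ← div_eq_mul_inv, div_lt_iff₀ (by positivity)]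
  have hcover : 1 ≤ μ.real G + μ.real Gᶜ := by
    simpa using measureReal_union_le (μ := μ) G Gᶜ
  have hGc : μ.real Gᶜ ≤ μ.real {c} + μ.real caps :=
    (measureReal_mono hfail).trans (measureReal_union_le _ _)
  change μ.real G > 1 - ψ
  linarith

/-- Theorem 7 (selectivity): given `M < ψ (2α)ⁿ` stimuli contents in the ball of centre
`c` and radius `R`, and a new stimulus `x_{M+1}` sampled uniformly from this ball, with
probability `> 1 - ψ` the neuron with weights `w = x_{M+1} - c` and threshold
`θ = α ⟪w, w⟫ + ⟪w, c⟫` detects `x_{M+1}` and rejects all the other stimuli. -/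
theorem single_neuron_selectivity
    (n M : ℕ) (hn : 0 < n)
    (c : EuclideanSpace ℝ (Fin n)) (R : ℝ) (hR : 0 < R)
    (x : Fin M → EuclideanSpace ℝ (Fin n))
    (hx : ∀ i, x i ∈ Metric.closedBall c R)
    (ψ α : ℝ) (hψ : 0 < ψ) (hψ1 : ψ < 1) (hα : 1 / 2 < α) (hα1 : α < 1)
    (hM : (M : ℝ) < ψ * (2 * α) ^ n)
    (μ : Measure (EuclideanSpace ℝ (Fin n)))
    (hμ : μ = (volume (Metric.closedBall c R))⁻¹ • volume.restrict (Metric.closedBall c R)) :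
    (μ {z | ⟪z - c, z⟫ > α * ⟪z - c, z - c⟫ + ⟪z - c, c⟫ ∧
        ∀ i : Fin M, ⟪z - c, x i⟫ ≤ α * ⟪z - c, z - c⟫ + ⟪z - c, c⟫}).toReal >
      1 - ψ :=
  single_neuron_selectivity_general n M hn c R hR x hx ψ α hα hα1 hM μ hμ
end

section
/- Let w be a unit vector in ℝⁿ, let c ∈ ℝⁿ, ρ > 0, and 0 < h < ρ. Let x be a random point sampled from the uniform (equi-)distribution in the closed ball of centre c and radius ρ. Then the probability that (w, x − c) > h is at most (1/2) (1 − h²/ρ²)^{n/2}; equivalently, the spherical cap { x : ‖x − c‖ ≤ ρ, (w, x − c) > h } has volume at most (1/2) (√(ρ² − h²))ⁿ Vₙ(𝔹ₙ). -/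
open MeasureTheory RealInnerProductSpace

lemma half_ball_bound (n : ℕ) (w : EuclideanSpace ℝ (Fin n)) (hw : ‖w‖ = 1) (r : ℝ) :
    volume {y : EuclideanSpace ℝ (Fin n) | ‖y‖ ≤ r ∧ 0 < ⟪w, y⟫} ≤
      volume (Metric.closedBall (0 : EuclideanSpace ℝ (Fin n)) r) / 2 := by
  have mcont : Continuous fun y : EuclideanSpace ℝ (Fin n) => ⟪w, y⟫ :=
    continuous_const.inner continuous_id
  have mA : MeasurableSet {y : EuclideanSpace ℝ (Fin n) | ‖y‖ ≤ r ∧ 0 < ⟪w, y⟫} := by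
    rw [Set.setOf_and]
    exact (measurableSet_le measurable_norm measurable_const).inter
      (measurableSet_lt measurable_const mcont.measurable)
  have mA' : MeasurableSet {y : EuclideanSpace ℝ (Fin n) | ‖y‖ ≤ r ∧ ⟪w, y⟫ < 0} := by
    rw [Set.setOf_and]
    exact (measurableSet_le measurable_norm measurable_const).inter
      (measurableSet_lt mcont.measurable measurable_const)
  have hnegA : -{y : EuclideanSpace ℝ (Fin n) | ‖y‖ ≤ r ∧ 0 < ⟪w, y⟫}
      = {y : EuclideanSpace ℝ (Fin n) | ‖y‖ ≤ r ∧ ⟪w, y⟫ < 0} := by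
    ext y
    simp only [Set.mem_neg, Set.mem_setOf_eq, norm_neg, inner_neg_right, neg_pos]
  have hAA' : volume {y : EuclideanSpace ℝ (Fin n) | ‖y‖ ≤ r ∧ ⟪w, y⟫ < 0}
      = volume {y : EuclideanSpace ℝ (Fin n) | ‖y‖ ≤ r ∧ 0 < ⟪w, y⟫} := by
    rw [← hnegA, Measure.measure_neg]
  have hdisj : Disjoint {y : EuclideanSpace ℝ (Fin n) | ‖y‖ ≤ r ∧ 0 < ⟪w, y⟫}
      {y : EuclideanSpace ℝ (Fin n) | ‖y‖ ≤ r ∧ ⟪w, y⟫ < 0} := by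
    rw [Set.disjoint_left]
    rintro y ⟨-, h1⟩ ⟨-, h2⟩
    exact absurd (h1.trans h2) (lt_irrefl _)
  have hsub : {y : EuclideanSpace ℝ (Fin n) | ‖y‖ ≤ r ∧ 0 < ⟪w, y⟫}
      ∪ {y : EuclideanSpace ℝ (Fin n) | ‖y‖ ≤ r ∧ ⟪w, y⟫ < 0}
      ⊆ Metric.closedBall (0 : EuclideanSpace ℝ (Fin n)) r := by
    rintro y (⟨hy, -⟩ | ⟨hy, -⟩) <;> simpa [Metric.mem_closedBall, dist_zero_right] using hy
  have key : volume {y : EuclideanSpace ℝ (Fin n) | ‖y‖ ≤ r ∧ 0 < ⟪w, y⟫}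
      + volume {y : EuclideanSpace ℝ (Fin n) | ‖y‖ ≤ r ∧ ⟪w, y⟫ < 0}
      ≤ volume (Metric.closedBall (0 : EuclideanSpace ℝ (Fin n)) r) := by
    rw [← measure_union hdisj mA']
    exact measure_mono hsub
  rw [hAA'] at key
  rw [ENNReal.le_div_iff_mul_le (Or.inl two_ne_zero) (Or.inl ENNReal.ofNat_ne_top), mul_two]
  exact key

/-- Spherical cap estimate (inequality (26)): for a unit vector `w` and a random point
`x` uniform in the ball of centre `c` and radius `ρ`, the probability that
`⟪w, x - c⟫ > h` is at most `(1/2)(1 - h²/ρ²)^{n/2}`; equivalently, the corresponding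
spherical cap has volume at most `(1/2) (√(ρ² - h²))ⁿ Vₙ(𝔹ₙ)`. -/
theorem spherical_cap_probability_estimate
    (n : ℕ) (hn : 0 < n)
    (w c : EuclideanSpace ℝ (Fin n)) (hw : ‖w‖ = 1)
    (ρ h : ℝ) (hρ : 0 < ρ) (hh : 0 < h) (hhρ : h < ρ)
    (μ : Measure (EuclideanSpace ℝ (Fin n)))
    (hμ : μ = (volume (Metric.closedBall c ρ))⁻¹ • volume.restrict (Metric.closedBall c ρ)) :
    (μ {x | ⟪w, x - c⟫ > h}).toReal ≤
        (1 / 2) * (1 - h ^ 2 / ρ ^ 2) ^ ((n : ℝ) / 2) ∧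
    volume {x : EuclideanSpace ℝ (Fin n) | ‖x - c‖ ≤ ρ ∧ ⟪w, x - c⟫ > h} ≤
      ENNReal.ofReal ((1 / 2) * Real.sqrt (ρ ^ 2 - h ^ 2) ^ n *
        (volume (Metric.closedBall (0 : EuclideanSpace ℝ (Fin n)) 1)).toReal) := by
  set r : ℝ := Real.sqrt (ρ ^ 2 - h ^ 2) with hr
  have hr2 : r ^ 2 = ρ ^ 2 - h ^ 2 := Real.sq_sqrt (by nlinarith)
  have hrpos : 0 < r := Real.sqrt_pos.mpr (by nlinarith)
  set V := volume (Metric.closedBall (0 : EuclideanSpace ℝ (Fin n)) 1) with hV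
  have hVpos : 0 < V := Metric.measure_closedBall_pos volume _ one_pos
  have hVfin : V < ⊤ := measure_closedBall_lt_top
  set v : EuclideanSpace ℝ (Fin n) := c + h • w with hv
  set S : Set (EuclideanSpace ℝ (Fin n)) := {x | ‖x - c‖ ≤ ρ ∧ ⟪w, x - c⟫ > h} with hS
  have hsub : S ⊆ (fun x : EuclideanSpace ℝ (Fin n) => x + -v) ⁻¹'
      {y : EuclideanSpace ℝ (Fin n) | ‖y‖ ≤ r ∧ 0 < ⟪w, y⟫} := by
    rintro x ⟨hx1, hx2⟩
    have hxv : x + -v = (x - c) - h • w := by rw [hv]; abel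
    constructor
    · show ‖x + -v‖ ≤ r
      rw [hxv]
      have h1 : ‖(x - c) - h • w‖ ^ 2 ≤ ρ ^ 2 - h ^ 2 := by
        have e1 : ‖(x - c) - h • w‖ ^ 2
            = ‖x - c‖ ^ 2 - 2 * (h * ⟪w, x - c⟫) + h ^ 2 := by
          rw [norm_sub_sq_real, real_inner_smul_right, norm_smul, Real.norm_eq_abs,
            abs_of_pos hh, hw, mul_one, real_inner_comm]
        have h2 : ‖x - c‖ ^ 2 ≤ ρ ^ 2 := by nlinarith [norm_nonneg (x - c)]
        nlinarith
      have h3 := Real.sqrt_le_sqrt h1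
      rwa [Real.sqrt_sq (norm_nonneg _)] at h3
    · show 0 < ⟪w, x + -v⟫
      rw [hxv, inner_sub_right, real_inner_smul_right, real_inner_self_eq_norm_sq, hw]
      simp only [one_pow, mul_one]
      linarith
  have hball : volume (Metric.closedBall (0 : EuclideanSpace ℝ (Fin n)) r)
      = ENNReal.ofReal (r ^ n) * V := by
    rw [Measure.addHaar_closedBall' volume 0 hrpos.le, finrank_euclideanSpace_fin]
  have hScap : volume S ≤ ENNReal.ofReal (r ^ n) * V / 2 := by
    calc volume S ≤ volume ((fun x : EuclideanSpace ℝ (Fin n) => x + -v) ⁻¹'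
          {y : EuclideanSpace ℝ (Fin n) | ‖y‖ ≤ r ∧ 0 < ⟪w, y⟫}) := measure_mono hsub
    _ = volume {y : EuclideanSpace ℝ (Fin n) | ‖y‖ ≤ r ∧ 0 < ⟪w, y⟫} :=
        measure_preimage_add_right volume (-v) _
    _ ≤ volume (Metric.closedBall (0 : EuclideanSpace ℝ (Fin n)) r) / 2 :=
        half_ball_bound n w hw r
    _ = ENNReal.ofReal (r ^ n) * V / 2 := by rw [hball]
  have hRHS : ENNReal.ofReal ((1 / 2) * r ^ n * V.toReal)
      = ENNReal.ofReal (r ^ n) * V / 2 := by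
    rw [ENNReal.ofReal_mul (by positivity), ENNReal.ofReal_mul (by norm_num),
      ENNReal.ofReal_toReal hVfin.ne]
    rw [show ENNReal.ofReal (1 / 2) = 1 / 2 by
      rw [ENNReal.ofReal_div_of_pos (by norm_num)]; norm_num]
    rw [div_eq_mul_inv, div_eq_mul_inv, one_mul]
    ring
  have part2 : volume S ≤ ENNReal.ofReal ((1 / 2) * r ^ n * V.toReal) := by
    rw [hRHS]; exact hScap
  refine ⟨?_, part2⟩
  have mset : MeasurableSet {x : EuclideanSpace ℝ (Fin n) | ⟪w, x - c⟫ > h} := by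
    have hco : Continuous fun x : EuclideanSpace ℝ (Fin n) => ⟪w, x - c⟫ :=
      continuous_const.inner (continuous_id.sub continuous_const)
    exact measurableSet_lt measurable_const hco.measurable
  have hB : volume (Metric.closedBall c ρ) = ENNReal.ofReal (ρ ^ n) * V := by
    rw [Measure.addHaar_closedBall' volume c hρ.le, finrank_euclideanSpace_fin]
  have hinter : {x : EuclideanSpace ℝ (Fin n) | ⟪w, x - c⟫ > h} ∩ Metric.closedBall c ρ
      = S := by
    ext x
    simp only [Set.mem_inter_iff, Set.mem_setOf_eq, Metric.mem_closedBall, dist_eq_norm, hS,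
      and_comm]
  have hμS : μ {x : EuclideanSpace ℝ (Fin n) | ⟪w, x - c⟫ > h}
      = (ENNReal.ofReal (ρ ^ n) * V)⁻¹ * volume S := by
    rw [hμ, Measure.smul_apply, Measure.restrict_apply mset, hinter, hB, smul_eq_mul]
  have hSreal : (volume S).toReal ≤ (1 / 2) * r ^ n * V.toReal :=
    ENNReal.toReal_le_of_le_ofReal (by positivity) part2
  have htoReal : (μ {x : EuclideanSpace ℝ (Fin n) | ⟪w, x - c⟫ > h}).toReal
      = (volume S).toReal / (ρ ^ n * V.toReal) := by
    rw [hμS, ENNReal.toReal_mul, ENNReal.toReal_inv, ENNReal.toReal_mul,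
      ENNReal.toReal_ofReal (by positivity), div_eq_mul_inv, mul_comm]
  have hVr : 0 < V.toReal := ENNReal.toReal_pos hVpos.ne' hVfin.ne
  have hrhs_eq : (1 / 2 : ℝ) * (1 - h ^ 2 / ρ ^ 2) ^ ((n : ℝ) / 2)
      = (1 / 2) * (r ^ n / ρ ^ n) := by
    have ha : (1 : ℝ) - h ^ 2 / ρ ^ 2 = (ρ ^ 2 - h ^ 2) / ρ ^ 2 := by field_simp
    have ha0 : (0:ℝ) ≤ 1 - h ^ 2 / ρ ^ 2 := by
      rw [ha]; exact div_nonneg (by nlinarith) (by positivity)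
    have hsq : (1 - h ^ 2 / ρ ^ 2 : ℝ) ^ ((1 : ℝ) / 2) = r / ρ := by
      rw [← Real.sqrt_eq_rpow, ha, Real.sqrt_div (by nlinarith : (0:ℝ) ≤ ρ ^ 2 - h ^ 2),
        Real.sqrt_sq hρ.le]
    have hpow : (1 - h ^ 2 / ρ ^ 2 : ℝ) ^ ((n : ℝ) / 2)
        = ((1 - h ^ 2 / ρ ^ 2 : ℝ) ^ ((1 : ℝ) / 2)) ^ (n : ℕ) := by
      rw [← Real.rpow_natCast ((1 - h ^ 2 / ρ ^ 2 : ℝ) ^ ((1:ℝ)/2)) n, ← Real.rpow_mul ha0,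
        show (1:ℝ)/2 * (n:ℝ) = (n:ℝ)/2 by ring]
    rw [hpow, hsq, div_pow]
  rw [htoReal, hrhs_eq]
  rw [div_le_iff₀ (by positivity)]
  calc (volume S).toReal ≤ (1 / 2) * r ^ n * V.toReal := hSreal
  _ = 1 / 2 * (r ^ n / ρ ^ n) * (ρ ^ n * V.toReal) := by field_simp
end

section
/- Let Y be a finite subset of ℝⁿ with |Y| ≥ 2, let x₀ ∈ Y, let θ₀ > θ > 0, and let w₀, w̄ ∈ ℝⁿ. Assume: (1) (w₀, x₀) > θ₀; (2) (w₀, x) > −(θ₀ − θ)/(|Y| − 1) for all x ∈ Y with x ≠ x₀; (3) (w̄, x) > θ for all x ∈ Y. Then for every a₀, ā ∈ [0, 1] with a₀ + ā ≥ 1, the vector w = a₀ w₀ + ā w̄ satisfies both (w, x₀) > θ and (w, Σ_{x ∈ Y} x) > θ. In particular, along the whole arc of synaptic weight vectors of the form a₀ w₀ + ā w̄ joining w₀ to w̄, the neuron with threshold θ remains responsive both to the known stimulus x₀ and to the combined stimulus Σ_{x ∈ Y} x. -/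
open RealInnerProductSpace

lemma arc_aux (a b u v θ : ℝ) (ha : 0 ≤ a) (hb : 0 ≤ b) (hab : 1 ≤ a + b)
    (hu : θ < u) (hv : θ < v) (hθ : 0 < θ) : θ < a * u + b * v := by
  rcases eq_or_lt_of_le ha with h | h
  · nlinarith
  · nlinarith [mul_lt_mul_of_pos_left hu h, mul_le_mul_of_nonneg_left hv.le hb]

/-- Acquiring memories: under conditions (1)–(3), all along the arc of weight vectors
`w = a₀ w₀ + ā w̄` (`a₀, ā ∈ [0,1]`, `a₀ + ā ≥ 1`) the neuron with threshold `θ`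
responds both to the known stimulus `x₀` and to the combined stimulus `Σ_{x ∈ Y} x`. -/
theorem neuron_remains_responsive_along_arc
    (n : ℕ) (hn : 0 < n)
    (Y : Finset (EuclideanSpace ℝ (Fin n))) (hYcard : 2 ≤ Y.card)
    (x₀ : EuclideanSpace ℝ (Fin n)) (hx₀ : x₀ ∈ Y)
    (θ₀ θ : ℝ) (hθ : 0 < θ) (hθ₀ : θ < θ₀)
    (w₀ wbar : EuclideanSpace ℝ (Fin n))
    (h1 : ⟪w₀, x₀⟫ > θ₀)
    (h2 : ∀ x ∈ Y, x ≠ x₀ → ⟪w₀, x⟫ > -((θ₀ - θ) / ((Y.card : ℝ) - 1)))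
    (h3 : ∀ x ∈ Y, ⟪wbar, x⟫ > θ) :
    ∀ a₀ abar : ℝ, a₀ ∈ Set.Icc (0 : ℝ) 1 → abar ∈ Set.Icc (0 : ℝ) 1 →
      1 ≤ a₀ + abar →
      ⟪a₀ • w₀ + abar • wbar, x₀⟫ > θ ∧
      ⟪a₀ • w₀ + abar • wbar, ∑ x ∈ Y, x⟫ > θ := by
  classical
  intro a₀ abar ha hb hab
  have hc1 : (1 : ℝ) ≤ (Y.card : ℝ) - 1 := by
    have : (2 : ℝ) ≤ (Y.card : ℝ) := by exact_mod_cast hYcard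
    linarith
  -- inner products with the sum
  have hsum0 : θ < ⟪w₀, ∑ x ∈ Y, x⟫ := by
    rw [inner_sum, ← Finset.add_sum_erase _ _ hx₀]
    have hcard : ((Y.erase x₀).card : ℝ) = (Y.card : ℝ) - 1 := by
      rw [Finset.card_erase_of_mem hx₀]
      have h1' : 1 ≤ Y.card := Finset.card_pos.mpr ⟨x₀, hx₀⟩
      push_cast [Nat.cast_sub h1']
      ring
    have hsum : ((Y.erase x₀).card : ℝ) * (-((θ₀ - θ) / ((Y.card : ℝ) - 1))) <
        ∑ x ∈ Y.erase x₀, ⟪w₀, x⟫ := by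
      have hne : (Y.erase x₀).Nonempty := by
        rw [← Finset.card_pos, Finset.card_erase_of_mem hx₀]
        omega
      have := Finset.sum_lt_sum_of_nonempty hne
        (fun i hi => h2 i (Finset.mem_of_mem_erase hi) (Finset.ne_of_mem_erase hi))
      simpa [Finset.sum_const, nsmul_eq_mul] using this
    rw [hcard] at hsum
    have h4 : ((Y.card : ℝ) - 1) * (-((θ₀ - θ) / ((Y.card : ℝ) - 1))) = -(θ₀ - θ) := by
      field_simp
    rw [h4] at hsum
    linarith
  have hsumbar : θ < ⟪wbar, ∑ x ∈ Y, x⟫ := by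
    rw [inner_sum]
    have hne : Y.Nonempty := ⟨x₀, hx₀⟩
    have := Finset.sum_lt_sum_of_nonempty hne (fun i hi => h3 i hi)
    have : (Y.card : ℝ) * θ < ∑ x ∈ Y, ⟪wbar, x⟫ := by
      simpa [Finset.sum_const, nsmul_eq_mul] using this
    nlinarith [hc1]
  have hexp : ∀ v : EuclideanSpace ℝ (Fin n),
      ⟪a₀ • w₀ + abar • wbar, v⟫ = a₀ * ⟪w₀, v⟫ + abar * ⟪wbar, v⟫ := by
    intro v
    rw [inner_add_left, real_inner_smul_left, real_inner_smul_left]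
  constructor
  · rw [hexp]
    exact arc_aux a₀ abar _ _ θ ha.1 hb.1 hab (lt_trans hθ₀ h1) (h3 x₀ hx₀) hθ
  · rw [hexp]
    exact arc_aux a₀ abar _ _ θ ha.1 hb.1 hab hsum0 hsumbar hθ
end
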